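/- arXiv:2011.03572 — 11 statements merged into one kernel-verified Lean document; each statement's English description precedes it below -/
import Mathlib

section
/- Let U₁, ..., Uₙ be subsets of ℝ^d that are all open (or all closed). For σ ⊆ [n], define the atom A_σ = (⋂_{i∈σ} U_i) \ (⋃_{j∉σ} U_j). If σ, τ ⊆ [n] and there exists a continuous path P (the image of a continuous map from [0,1]) from a point of A_σ to a point of A_τ with P ⊆ A_σ ∪ A_τ, and both A_σ and A_τ are nonempty, then σ ⊆ τ or τ ⊆ σ. -/
/-- The atom of `σ` with respect to the collection `U`:
`⋂_{i ∈ σ} U i ∖ ⋃_{j ∉ σ} U j`. -/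
def atom {ι X : Type*} (U : ι → Set X) (σ : Finset ι) : Set X :=
  {x | ∀ i, i ∈ σ ↔ x ∈ U i}

/-- If all `U i` are open (or all closed), and a continuous path runs from a point
of `atom U σ` to a point of `atom U τ` with image contained in the union of these two
atoms, then `σ ⊆ τ` or `τ ⊆ σ`. -/
theorem stmt_1 {d n : ℕ} (U : Fin n → Set (Fin d → ℝ))
    (hU : (∀ i, IsOpen (U i)) ∨ (∀ i, IsClosed (U i)))
    (σ τ : Finset (Fin n))
    (γ : ℝ → (Fin d → ℝ)) (hγ : ContinuousOn γ (Set.Icc 0 1))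
    (h0 : γ 0 ∈ atom U σ) (h1 : γ 1 ∈ atom U τ)
    (him : γ '' Set.Icc 0 1 ⊆ atom U σ ∪ atom U τ) :
    σ ⊆ τ ∨ τ ⊆ σ := by
  by_contra hc
  push_neg at hc
  obtain ⟨hστ, hτσ⟩ := hc
  obtain ⟨i, hiσ, hiτ⟩ := Finset.not_subset.1 hστ
  obtain ⟨j, hjτ, hjσ⟩ := Finset.not_subset.1 hτσ
  set g : Set.Icc (0:ℝ) 1 → (Fin d → ℝ) := fun t => γ t with hg
  have hgc : Continuous g := hγ.restrict
  have key : ∀ t : Set.Icc (0:ℝ) 1, (g t ∈ U i ∧ g t ∉ U j) ∨ (g t ∉ U i ∧ g t ∈ U j) := by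
    intro t
    rcases him ⟨t, t.2, rfl⟩ with h | h
    · exact Or.inl ⟨(h i).1 hiσ, fun hj => hjσ ((h j).2 hj)⟩
    · exact Or.inr ⟨fun hi => hiτ ((h i).2 hi), (h j).1 hjτ⟩
  have hset : g ⁻¹' (U i) = g ⁻¹' (U j)ᶜ := by
    ext t
    rcases key t with ⟨ha, hb⟩ | ⟨ha, hb⟩
    · simp [ha, hb]
    · simp [ha, hb]
  haveI : PreconnectedSpace (Set.Icc (0:ℝ) 1) :=
    Subtype.preconnectedSpace isPreconnected_Icc
  have hclopen : IsClopen (g ⁻¹' (U i)) := by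
    rcases hU with hO | hC
    · exact ⟨hset ▸ ((hO j).isClosed_compl.preimage hgc), (hO i).preimage hgc⟩
    · exact ⟨(hC i).preimage hgc, hset ▸ ((hC j).isOpen_compl.preimage hgc)⟩
  rcases isClopen_iff.1 hclopen with h | h
  · have h0' : (⟨0, by norm_num⟩ : Set.Icc (0:ℝ) 1) ∈ g ⁻¹' (U i) := (h0 i).1 hiσ
    rw [h] at h0'
    exact h0'
  · have h1' : (⟨1, by norm_num⟩ : Set.Icc (0:ℝ) 1) ∈ g ⁻¹' (U i) := h ▸ Set.mem_univ _
    exact hiτ ((h1 i).2 h1')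
end

section
/- In the code C = {{1,2,3,5},{1,2,4,5},{1,2,5,6},{1,2,5},{1,3},{1,4},{1,5},∅} ⊆ 2^{[6]}, every feasible path in the codeword graph G_C from {1,3} to {1,4} contains the codeword {1,2,4,5}. -/
/-- A walk in the codeword graph `G_C`: a nonempty list of codewords of `C` in which
consecutive codewords are strictly comparable. -/
def IsWalk {α : Type*} (C : Set (Finset α)) (w : List (Finset α)) : Prop :=
  w ≠ [] ∧ (∀ v ∈ w, v ∈ C) ∧ w.Chain' (fun a b => a ⊂ b ∨ b ⊂ a)

/-- A walk `v₁,...,v_k` is feasible if `v_i ∩ v_j ⊆ v_m` for all `i < m < j`. -/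
def Feasible {α : Type*} [DecidableEq α] (w : List (Finset α)) : Prop :=
  ∀ i m j : Fin w.length, (i : ℕ) < m → (m : ℕ) < j → w.get i ∩ w.get j ⊆ w.get m

/-- The code of Example `manypaths`. -/
def exCode : Set (Finset ℕ) :=
  {{1,2,3,5}, {1,2,4,5}, {1,2,5,6}, {1,2,5}, {1,3}, {1,4}, {1,5}, ∅}

/-- In the code `exCode`, every feasible path from `{1,3}` to `{1,4}` in the codeword
graph contains the codeword `{1,2,4,5}`; i.e., `{1,2,4,5}` is forced between them. -/
theorem stmt_4 (w : List (Finset ℕ))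
    (hwalk : IsWalk exCode w) (hfeas : Feasible w) (hpath : w.Nodup)
    (hhead : w.head? = some {1,3}) (hlast : w.getLast? = some {1,4}) :
    ({1,2,4,5} : Finset ℕ) ∈ w := by
  obtain ⟨hne, hmem, hchain⟩ := hwalk
  have hn1 : 0 < w.length := List.length_pos_iff.mpr hne
  have h0 : w.get ⟨0, hn1⟩ = ({1,3} : Finset ℕ) := by
    rw [List.head?_eq_head hne] at hhead
    simpa [List.head_eq_getElem] using hhead
  have hL : w.get ⟨w.length - 1, by omega⟩ = ({1,4} : Finset ℕ) := by
    rw [List.getLast?_eq_getLast hne, List.getLast_eq_getElem] at hlast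
    simpa using hlast
  have hn2 : 2 ≤ w.length := by
    by_contra h
    have : w.length = 1 := by omega
    have : (⟨0, hn1⟩ : Fin w.length) = ⟨w.length - 1, by omega⟩ := by
      simp [this]
    rw [this, hL] at h0
    exact absurd h0 (by decide)
  -- the second-to-last vertex
  have hc : w.get ⟨w.length - 2, by omega⟩ ⊂ w.get ⟨w.length - 2 + 1, by omega⟩ ∨ w.get ⟨w.length - 2 + 1, by omega⟩ ⊂ w.get ⟨w.length - 2, by omega⟩ := List.isChain_iff_getElem.mp hchain (w.length - 2) (by omega)
  have hcm : w.get ⟨w.length - 2, by omega⟩ ∈ exCode := hmem _ (List.get_mem ..)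
  have heq : (⟨w.length - 2 + 1, by omega⟩ : Fin w.length) = ⟨w.length - 1, by omega⟩ := by
    simp; omega
  rw [heq, hL] at hc
  set c := w.get ⟨w.length - 2, by omega⟩ with hcdef
  simp only [exCode, Set.mem_insert_iff, Set.mem_singleton_iff] at hcm
  have hcB : c = ({1,2,4,5} : Finset ℕ) ∨ c = (∅ : Finset ℕ) := by
    rcases hcm with h|h|h|h|h|h|h|h <;> rw [h] at hc ⊢ <;> revert hc <;> decide
  rcases hcB with h | h
  · rw [← h]; exact List.get_mem ..
  · -- c = ∅, impossible by feasibility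
    exfalso
    have hn3 : 3 ≤ w.length := by
      by_contra hn
      have h2 : w.length = 2 := by omega
      have : (⟨0, hn1⟩ : Fin w.length) = ⟨w.length - 2, by omega⟩ := by simp [h2]
      rw [this, ← hcdef, h] at h0
      exact absurd h0 (by decide)
    have := hfeas ⟨0, hn1⟩ ⟨w.length - 2, by omega⟩ ⟨w.length - 1, by omega⟩
      (by simp; omega) (by simp; omega)
    rw [h0, hL, ← hcdef, h] at this
    exact absurd this (by decide)
end

section
/- In the code C = {{1,4,5},{4,5},{2,4,5,6},{4,6},{4,6,7},{4,7},{3,4,7},{1,2,3},{1},{2},{3},∅}, the sequence {1,4,5}, {4,5}, {2,4,5,6}, {4,6}, {4,6,7}, {4,7}, {3,4,7} is the unique feasible walk in G_C from {1,4,5} to {3,4,7}; i.e., this sequence is strongly order-forced. -/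
def exCode5 : Set (Finset ℕ) :=
  {{1,4,5}, {4,5}, {2,4,5,6}, {4,6}, {4,6,7}, {4,7}, {3,4,7}, {1,2,3}, {1}, {2}, {3}, ∅}

def exSeq : List (Finset ℕ) := [{1,4,5}, {4,5}, {2,4,5,6}, {4,6}, {4,6,7}, {4,7}, {3,4,7}]

/-- Codewords containing `4` are among the seven path codewords. -/
lemma mem_four (s : Finset ℕ) (hs : s ∈ exCode5) (h4 : (4:ℕ) ∈ s) :
    s = {1,4,5} ∨ s = {4,5} ∨ s = {2,4,5,6} ∨ s = {4,6} ∨ s = {4,6,7} ∨ s = {4,7} ∨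
      s = {3,4,7} := by
  simp only [exCode5, Set.mem_insert_iff, Set.mem_singleton_iff] at hs
  rcases hs with h|h|h|h|h|h|h|h|h|h|h|h <;> subst h <;>
    first | tauto | exact absurd h4 (by decide)

/-- The four "maximal" codewords have no strict superset in the code. -/
lemma max_free (s : Finset ℕ)
    (hmax : s = {1,4,5} ∨ s = {2,4,5,6} ∨ s = {4,6,7} ∨ s = {3,4,7})
    (t : Finset ℕ) (ht : t ∈ exCode5) : ¬ s ⊂ t := by
  simp only [exCode5, Set.mem_insert_iff, Set.mem_singleton_iff] at ht
  rcases hmax with h|h|h|h <;> subst h <;>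
    rcases ht with h|h|h|h|h|h|h|h|h|h|h|h <;> subst h <;> decide

/-- The sequence `{1,4,5},{4,5},{2,4,5,6},{4,6},{4,6,7},{4,7},{3,4,7}` is the unique
feasible walk in `G_C` from `{1,4,5}` to `{3,4,7}`: it is strongly order-forced. -/
theorem stmt_5 :
    (IsWalk exCode5 exSeq ∧ Feasible exSeq) ∧
    ∀ w : List (Finset ℕ), IsWalk exCode5 w → Feasible w →
      w.head? = some {1,4,5} → w.getLast? = some {3,4,7} → w = exSeq := by
  constructor
  · refine ⟨⟨by simp [exSeq], ?_, ?_⟩, ?_⟩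
    · intro v hv
      simp only [exSeq, List.mem_cons, List.not_mem_nil, or_false] at hv
      rcases hv with h|h|h|h|h|h|h <;> subst h <;> simp [exCode5]
    · simp only [exSeq, List.Chain', List.isChain_cons_cons, List.isChain_singleton, and_true]
      refine ⟨?_,?_,?_,?_,?_,?_⟩ <;> [right;left;right;left;right;left] <;> decide
    · unfold Feasible; decide
  intro w hw hf hh hl
  obtain ⟨hne, hmemC, hch⟩ := hw
  have hn0 : 0 < w.length := List.length_pos_iff.mpr hne
  -- endpoints
  have h0 : w.get ⟨0, hn0⟩ = ({1,4,5} : Finset ℕ) := by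
    have hh' : w.head hne = {1,4,5} := by
      rwa [List.head?_eq_head hne, Option.some_inj] at hh
    rw [List.get_eq_getElem, ← List.head_eq_getElem]; exact hh'
  have hL : w.get ⟨w.length - 1, by omega⟩ = ({3,4,7} : Finset ℕ) := by
    have hl' : w.getLast hne = {3,4,7} := by
      rwa [List.getLast?_eq_getLast hne, Option.some_inj] at hl
    rw [List.get_eq_getElem, ← List.getLast_eq_getElem]; exact hl'
  -- chain property, indexed form
  have hchain : ∀ i (h : i + 1 < w.length),
      w.get ⟨i, by omega⟩ ⊂ w.get ⟨i+1, h⟩ ∨ w.get ⟨i+1, h⟩ ⊂ w.get ⟨i, by omega⟩ := by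
    unfold List.Chain' at hch
    rw [List.isChain_iff_getElem] at hch
    intro i h; exact hch i (by omega)
  -- every codeword on the walk contains 4
  have h4 : ∀ i (h : i < w.length), (4:ℕ) ∈ w.get ⟨i, h⟩ := by
    intro i h
    by_cases hi0 : i = 0
    · subst hi0
      have : w.get ⟨0, h⟩ = ({1,4,5} : Finset ℕ) := h0
      rw [this]; decide
    by_cases hiL : i = w.length - 1
    · have : w.get ⟨i, h⟩ = ({3,4,7} : Finset ℕ) := by subst hiL; exact hL
      rw [this]; decide
    · have h1 : 0 < i := by omega
      have h2 : i < w.length - 1 := by omega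
      have := hf ⟨0, hn0⟩ ⟨i, h⟩ ⟨w.length - 1, by omega⟩ h1 h2
      rw [h0, hL] at this
      have h45 : ({1,4,5} : Finset ℕ) ∩ {3,4,7} = {4} := by decide
      rw [h45] at this
      exact this (by decide)
  -- every codeword on the walk is one of the seven path codewords
  have hseven : ∀ i (h : i < w.length),
      w.get ⟨i, h⟩ = {1,4,5} ∨ w.get ⟨i, h⟩ = {4,5} ∨ w.get ⟨i, h⟩ = {2,4,5,6} ∨
      w.get ⟨i, h⟩ = {4,6} ∨ w.get ⟨i, h⟩ = {4,6,7} ∨ w.get ⟨i, h⟩ = {4,7} ∨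
      w.get ⟨i, h⟩ = {3,4,7} := by
    intro i h
    exact mem_four _ (hmemC _ (List.get_mem w ⟨i, h⟩)) (h4 i h)
  -- a maximal codeword occurs at most once on the walk
  have honce : ∀ i j (hi : i < w.length) (hj : j < w.length), i < j →
      w.get ⟨i, hi⟩ = w.get ⟨j, hj⟩ →
      (w.get ⟨i, hi⟩ = {1,4,5} ∨ w.get ⟨i, hi⟩ = {2,4,5,6} ∨
        w.get ⟨i, hi⟩ = {4,6,7} ∨ w.get ⟨i, hi⟩ = {3,4,7}) → False := by
    intro i j hi hj hij heq hmax
    have hcomp := hchain i (by omega)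
    by_cases hj1 : j = i + 1
    · subst hj1
      rcases hcomp with hc | hc
      · rw [← heq] at hc; exact ssubset_irrefl _ hc
      · rw [← heq] at hc; exact ssubset_irrefl _ hc
    · have hj2 : i + 1 < j := by omega
      have hsub := hf ⟨i, hi⟩ ⟨i+1, by omega⟩ ⟨j, hj⟩ (by omega : i < i + 1) hj2
      rw [← heq, Finset.inter_self] at hsub
      rcases hcomp with hc | hc
      · exact max_free _ hmax _ (hmemC _ (List.get_mem w ⟨i+1, by omega⟩)) hc
      · exact ssubset_irrefl _ (lt_of_le_of_lt hsub hc)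
  -- helper: if position k carries a codeword other than {3,4,7}, position k+1 exists
  have hnext : ∀ k (hk : k < w.length), w.get ⟨k, hk⟩ ≠ ({3,4,7} : Finset ℕ) →
      k + 1 < w.length := by
    intro k hk hne347
    by_cases hkL : k = w.length - 1
    · exfalso
      apply hne347
      subst hkL; exact hL
    · omega
  -- March down the walk.
  have hn1 : 1 < w.length := hnext 0 hn0 (by rw [h0]; decide)
  have h1 : w.get ⟨1, hn1⟩ = ({4,5} : Finset ℕ) := by
    have hc := hchain 0 hn1
    rw [h0] at hc
    rcases hseven 1 hn1 with h|h|h|h|h|h|h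
    · rw [h] at hc; exact absurd hc (by decide)
    · exact h
    · rw [h] at hc; exact absurd hc (by decide)
    · rw [h] at hc; exact absurd hc (by decide)
    · rw [h] at hc; exact absurd hc (by decide)
    · rw [h] at hc; exact absurd hc (by decide)
    · rw [h] at hc; exact absurd hc (by decide)
  have hn2 : 2 < w.length := hnext 1 hn1 (by rw [h1]; decide)
  have h2 : w.get ⟨2, hn2⟩ = ({2,4,5,6} : Finset ℕ) := by
    have hc := hchain 1 hn2
    rw [h1] at hc
    rcases hseven 2 hn2 with h|h|h|h|h|h|h
    · exact absurd (honce 0 2 hn0 hn2 (by omega) (h0.trans h.symm) (Or.inl h0)) (by tauto)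
    · rw [h] at hc; exact absurd hc (by decide)
    · exact h
    · rw [h] at hc; exact absurd hc (by decide)
    · rw [h] at hc; exact absurd hc (by decide)
    · rw [h] at hc; exact absurd hc (by decide)
    · rw [h] at hc; exact absurd hc (by decide)
  have hn3 : 3 < w.length := hnext 2 hn2 (by rw [h2]; decide)
  have h3 : w.get ⟨3, hn3⟩ = ({4,6} : Finset ℕ) := by
    have hc := hchain 2 hn3
    rw [h2] at hc
    rcases hseven 3 hn3 with h|h|h|h|h|h|h
    · rw [h] at hc; exact absurd hc (by decide)
    · -- backtrack to {4,5}: look one step ahead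
      exfalso
      have hn4 : 4 < w.length := hnext 3 hn3 (by rw [h]; decide)
      have hc4 := hchain 3 hn4
      rw [h] at hc4
      rcases hseven 4 hn4 with g|g|g|g|g|g|g
      · exact honce 0 4 hn0 hn4 (by omega) (h0.trans g.symm) (Or.inl h0)
      · rw [g] at hc4; exact absurd hc4 (by decide)
      · exact honce 2 4 hn2 hn4 (by omega) (h2.trans g.symm) (Or.inr (Or.inl h2))
      · rw [g] at hc4; exact absurd hc4 (by decide)
      · rw [g] at hc4; exact absurd hc4 (by decide)
      · rw [g] at hc4; exact absurd hc4 (by decide)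
      · rw [g] at hc4; exact absurd hc4 (by decide)
    · rw [h] at hc; exact absurd hc (by decide)
    · exact h
    · rw [h] at hc; exact absurd hc (by decide)
    · rw [h] at hc; exact absurd hc (by decide)
    · rw [h] at hc; exact absurd hc (by decide)
  have hn4 : 4 < w.length := hnext 3 hn3 (by rw [h3]; decide)
  have h4' : w.get ⟨4, hn4⟩ = ({4,6,7} : Finset ℕ) := by
    have hc := hchain 3 hn4
    rw [h3] at hc
    rcases hseven 4 hn4 with h|h|h|h|h|h|h
    · rw [h] at hc; exact absurd hc (by decide)
    · rw [h] at hc; exact absurd hc (by decide)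
    · exact absurd (honce 2 4 hn2 hn4 (by omega) (h2.trans h.symm) (Or.inr (Or.inl h2)))
        (by tauto)
    · rw [h] at hc; exact absurd hc (by decide)
    · exact h
    · rw [h] at hc; exact absurd hc (by decide)
    · rw [h] at hc; exact absurd hc (by decide)
  have hn5 : 5 < w.length := hnext 4 hn4 (by rw [h4']; decide)
  have h5 : w.get ⟨5, hn5⟩ = ({4,7} : Finset ℕ) := by
    have hc := hchain 4 hn5
    rw [h4'] at hc
    rcases hseven 5 hn5 with h|h|h|h|h|h|h
    · rw [h] at hc; exact absurd hc (by decide)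
    · rw [h] at hc; exact absurd hc (by decide)
    · rw [h] at hc; exact absurd hc (by decide)
    · -- backtrack to {4,6}: look one step ahead
      exfalso
      have hn6 : 6 < w.length := hnext 5 hn5 (by rw [h]; decide)
      have hc6 := hchain 5 hn6
      rw [h] at hc6
      rcases hseven 6 hn6 with g|g|g|g|g|g|g
      · rw [g] at hc6; exact absurd hc6 (by decide)
      · rw [g] at hc6; exact absurd hc6 (by decide)
      · exact honce 2 6 hn2 hn6 (by omega) (h2.trans g.symm) (Or.inr (Or.inl h2))
      · rw [g] at hc6; exact absurd hc6 (by decide)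
      · exact honce 4 6 hn4 hn6 (by omega) (h4'.trans g.symm) (Or.inr (Or.inr (Or.inl h4')))
      · rw [g] at hc6; exact absurd hc6 (by decide)
      · rw [g] at hc6; exact absurd hc6 (by decide)
    · rw [h] at hc; exact absurd hc (by decide)
    · exact h
    · rw [h] at hc; exact absurd hc (by decide)
  have hn6 : 6 < w.length := hnext 5 hn5 (by rw [h5]; decide)
  have h6 : w.get ⟨6, hn6⟩ = ({3,4,7} : Finset ℕ) := by
    have hc := hchain 5 hn6
    rw [h5] at hc
    rcases hseven 6 hn6 with h|h|h|h|h|h|h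
    · rw [h] at hc; exact absurd hc (by decide)
    · rw [h] at hc; exact absurd hc (by decide)
    · rw [h] at hc; exact absurd hc (by decide)
    · rw [h] at hc; exact absurd hc (by decide)
    · exact absurd (honce 4 6 hn4 hn6 (by omega) (h4'.trans h.symm)
        (Or.inr (Or.inr (Or.inl h4')))) (by tauto)
    · rw [h] at hc; exact absurd hc (by decide)
    · exact h
  -- the walk ends at position 6
  have hlen : w.length = 7 := by
    by_contra hlen
    have h7 : 6 < w.length - 1 := by omega
    exact honce 6 (w.length - 1) hn6 (by omega) h7 (h6.trans hL.symm)
      (Or.inr (Or.inr (Or.inr h6)))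
  -- conclude
  refine List.ext_get (by rw [hlen]; rfl) ?_
  intro n hn1' hn2'
  have hn7 : n < 7 := by omega
  interval_cases n
  · exact h0
  · exact h1
  · exact h2
  · exact h3
  · exact h4'
  · exact h5
  · exact h6
end

section
/- Let U₁,...,Uₙ be convex open sets in ℝ^d realizing a code C, suppose a codeword v ∈ C is forced between codewords σ and τ (every feasible path in G_C from σ to τ passes through v), and let x ∈ A_σ and y ∈ A_τ. Then the segment [x,y] intersects the atom A_v. -/
open Set Filter Topology

namespace Stmt7Aux

variable {d n : ℕ} (U : Fin n → Set (Fin d → ℝ)) (x y : Fin d → ℝ)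

noncomputable def fp (t : ℝ) : Fin d → ℝ := x + t • (y - x)

open Classical in
noncomputable def cw (t : ℝ) : Finset (Fin n) :=
  Finset.univ.filter (fun i => fp x y t ∈ U i)

lemma mem_cw {t : ℝ} {i : Fin n} : i ∈ cw U x y t ↔ fp x y t ∈ U i := by
  simp [cw]

lemma fp_cont : Continuous (fp x y) :=
  continuous_const.add (continuous_id.smul continuous_const)

lemma fp_between (hUconv : ∀ i, Convex ℝ (U i)) {i : Fin n} {t₁ t₂ t₃ : ℝ}
    (h12 : t₁ ≤ t₂) (h23 : t₂ ≤ t₃) (h1 : fp x y t₁ ∈ U i) (h3 : fp x y t₃ ∈ U i) :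
    fp x y t₂ ∈ U i := by
  rcases eq_or_lt_of_le (h12.trans h23) with h | h
  · have : t₂ = t₁ := le_antisymm (h ▸ h23) h12
    rwa [this]
  · set θ : ℝ := (t₂ - t₁) / (t₃ - t₁) with hθ
    have hne : t₃ - t₁ ≠ 0 := sub_ne_zero.2 h.ne'
    have hθ0 : (0:ℝ) ≤ θ := div_nonneg (by linarith) (by linarith)
    have hθ1 : θ ≤ 1 := (div_le_one (by linarith)).2 (by linarith)
    have ht2 : t₂ = (1 - θ) * t₁ + θ * t₃ := by
      rw [hθ]
      field_simp
      ring
    have hkey : fp x y t₂ = (1 - θ) • fp x y t₁ + θ • fp x y t₃ := by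
      rw [ht2]
      unfold fp
      match_scalars <;> ring
    rw [hkey]
    exact hUconv i h1 h3 (by linarith) hθ0 (by ring)

lemma cw_between (hUconv : ∀ i, Convex ℝ (U i)) {t₁ t₂ t₃ : ℝ}
    (h12 : t₁ ≤ t₂) (h23 : t₂ ≤ t₃) :
    cw U x y t₁ ∩ cw U x y t₃ ⊆ cw U x y t₂ := by
  intro i hi
  rw [Finset.mem_inter, mem_cw U x y, mem_cw U x y] at hi
  exact (mem_cw U x y).2 (fp_between U x y hUconv h12 h23 hi.1 hi.2)

lemma cw_right (hUopen : ∀ i, IsOpen (U i)) (hUconv : ∀ i, Convex ℝ (U i)) (t : ℝ) :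
    ∃ ρ : Finset (Fin n), cw U x y t ⊆ ρ ∧ ∀ᶠ s in 𝓝[>] t, cw U x y s = ρ := by
  classical
  have dich : ∀ i : Fin n,
      (∀ᶠ s in 𝓝[>] t, fp x y s ∈ U i) ∨ (∀ᶠ s in 𝓝[>] t, fp x y s ∉ U i) := by
    intro i
    by_cases h : ∀ᶠ s in 𝓝[>] t, fp x y s ∉ U i
    · exact Or.inr h
    left
    rw [not_eventually] at h
    simp only [not_not] at h
    obtain ⟨u, hu1, hu2⟩ := (h.and_eventually self_mem_nhdsWithin).exists
    filter_upwards [Ioo_mem_nhdsGT hu2] with s hs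
    obtain ⟨p, hp1, hp2⟩ := (h.and_eventually
      (Filter.eventually_of_mem (Ioo_mem_nhdsGT hs.1) (fun q hq => hq))).exists
    exact fp_between U x y hUconv hp2.2.le hs.2.le hp1 hu1
  set ρ : Finset (Fin n) :=
    Finset.univ.filter (fun i => ∀ᶠ s in 𝓝[>] t, fp x y s ∈ U i) with hρ
  have hev : ∀ᶠ s in 𝓝[>] t, ∀ i, (i ∈ ρ ↔ fp x y s ∈ U i) := by
    rw [eventually_all]
    intro i
    by_cases hi : i ∈ ρ
    · have h1 : ∀ᶠ s in 𝓝[>] t, fp x y s ∈ U i := by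
        simpa [hρ] using hi
      filter_upwards [h1] with s hs
      simp [hi, hs]
    · have h1 : ∀ᶠ s in 𝓝[>] t, fp x y s ∉ U i := by
        rcases dich i with h | h
        · exact absurd (by simp [hρ, h]) hi
        · exact h
      filter_upwards [h1] with s hs
      simp [hi, hs]
  refine ⟨ρ, ?_, ?_⟩
  · intro i hi
    rw [mem_cw U x y] at hi
    have : ∀ᶠ s in 𝓝 t, fp x y s ∈ U i :=
      (fp_cont x y).continuousAt.eventually_mem ((hUopen i).mem_nhds hi)
    simp only [hρ, Finset.mem_filter, Finset.mem_univ, true_and]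
    exact this.filter_mono nhdsWithin_le_nhds
  · filter_upwards [hev] with s hs
    ext i
    rw [mem_cw U x y]
    exact (hs i).symm

lemma cw_left (hUopen : ∀ i, IsOpen (U i)) (hUconv : ∀ i, Convex ℝ (U i)) (t : ℝ) :
    ∃ ρ : Finset (Fin n), cw U x y t ⊆ ρ ∧ ∀ᶠ s in 𝓝[<] t, cw U x y s = ρ := by
  classical
  have dich : ∀ i : Fin n,
      (∀ᶠ s in 𝓝[<] t, fp x y s ∈ U i) ∨ (∀ᶠ s in 𝓝[<] t, fp x y s ∉ U i) := by
    intro i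
    by_cases h : ∀ᶠ s in 𝓝[<] t, fp x y s ∉ U i
    · exact Or.inr h
    left
    rw [not_eventually] at h
    simp only [not_not] at h
    obtain ⟨u, hu1, hu2⟩ := (h.and_eventually self_mem_nhdsWithin).exists
    filter_upwards [Ioo_mem_nhdsLT hu2] with s hs
    obtain ⟨p, hp1, hp2⟩ := (h.and_eventually
      (Filter.eventually_of_mem (Ioo_mem_nhdsLT hs.2) (fun q hq => hq))).exists
    exact fp_between U x y hUconv hs.1.le hp2.1.le hu1 hp1
  set ρ : Finset (Fin n) :=
    Finset.univ.filter (fun i => ∀ᶠ s in 𝓝[<] t, fp x y s ∈ U i) with hρ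
  have hev : ∀ᶠ s in 𝓝[<] t, ∀ i, (i ∈ ρ ↔ fp x y s ∈ U i) := by
    rw [eventually_all]
    intro i
    by_cases hi : i ∈ ρ
    · have h1 : ∀ᶠ s in 𝓝[<] t, fp x y s ∈ U i := by
        simpa [hρ] using hi
      filter_upwards [h1] with s hs
      simp [hi, hs]
    · have h1 : ∀ᶠ s in 𝓝[<] t, fp x y s ∉ U i := by
        rcases dich i with h | h
        · exact absurd (by simp [hρ, h]) hi
        · exact h
      filter_upwards [h1] with s hs
      simp [hi, hs]
  refine ⟨ρ, ?_, ?_⟩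
  · intro i hi
    rw [mem_cw U x y] at hi
    have : ∀ᶠ s in 𝓝 t, fp x y s ∈ U i :=
      (fp_cont x y).continuousAt.eventually_mem ((hUopen i).mem_nhds hi)
    simp only [hρ, Finset.mem_filter, Finset.mem_univ, true_and]
    exact this.filter_mono nhdsWithin_le_nhds
  · filter_upwards [hev] with s hs
    ext i
    rw [mem_cw U x y]
    exact (hs i).symm



def ev1 (i : Fin n) (a b : ℝ) : Prop :=
  ∃ s ∈ Ioo a b, fp x y s ∈ U i ∧ ∃ p ∈ Ioo a s, fp x y p ∉ U i

def ev2 (i : Fin n) (a b : ℝ) : Prop :=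
  ∃ s ∈ Ioo a b, fp x y s ∉ U i ∧ ∃ p ∈ Ioo a s, fp x y p ∈ U i

open Classical in
noncomputable def muu (a b : ℝ) : ℕ :=
  ∑ i : Fin n, ((if ev1 U x y i a b then 1 else 0) + (if ev2 U x y i a b then 1 else 0))

lemma ev1_mono {i : Fin n} {a a' b : ℝ} (h : a ≤ a') (h1 : ev1 U x y i a' b) :
    ev1 U x y i a b := by
  obtain ⟨s, hs, hsU, p, hp, hpU⟩ := h1
  exact ⟨s, ⟨lt_of_le_of_lt h hs.1, hs.2⟩, hsU, p, ⟨lt_of_le_of_lt h hp.1, hp.2⟩, hpU⟩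

lemma ev2_mono {i : Fin n} {a a' b : ℝ} (h : a ≤ a') (h1 : ev2 U x y i a' b) :
    ev2 U x y i a b := by
  obtain ⟨s, hs, hsU, p, hp, hpU⟩ := h1
  exact ⟨s, ⟨lt_of_le_of_lt h hs.1, hs.2⟩, hsU, p, ⟨lt_of_le_of_lt h hp.1, hp.2⟩, hpU⟩

open Classical in
lemma term_mono {i : Fin n} {a a' b : ℝ} (h : a ≤ a') :
    ((if ev1 U x y i a' b then 1 else 0) + (if ev2 U x y i a' b then 1 else 0) : ℕ) ≤
    ((if ev1 U x y i a b then 1 else 0) + (if ev2 U x y i a b then 1 else 0) : ℕ) := by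
  gcongr <;> [skip; skip] <;> split_ifs with h1 h2
  · exact le_rfl
  · exact absurd (ev1_mono U x y h h1) h2
  · exact Nat.zero_le _
  · exact le_rfl
  · exact le_rfl
  · exact absurd (ev2_mono U x y h h1) h2
  · exact Nat.zero_le _
  · exact le_rfl

/-- generic helper for prepending to a walk -/
lemma extend_aux {ts' : List ℝ} (hne' : ts' ≠ []) {R : ℝ → ℝ → Prop}
    (h1 : ts'.Pairwise (· < ·)) (h3 : ts'.Chain' R) {t : ℝ}
    (hlt : ∀ s ∈ ts', t < s) (hR : R t (ts'.head hne')) :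
    (t :: ts').Pairwise (· < ·) ∧ (t :: ts').Chain' R := by
  refine ⟨List.pairwise_cons.2 ⟨hlt, h1⟩, List.isChain_cons.2 ⟨?_, h3⟩⟩
  intro z hz
  rw [List.head?_eq_head hne', Option.mem_def, Option.some_inj] at hz
  exact hz ▸ hR

/-- loop erasure -/
lemma erase_walk {α β : Type*} [DecidableEq β] (g : α → β) (S : β → β → Prop) :
    ∀ N : ℕ, ∀ ts : List α, ts.length ≤ N → ∀ hne : ts ≠ [],
      ts.Chain' (fun s u => S (g s) (g u)) →
      ∃ ts' : List α, ∃ hne' : ts' ≠ [],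
        List.Sublist ts' ts ∧ ts'.head hne' = ts.head hne ∧
        g (ts'.getLast hne') = g (ts.getLast hne) ∧
        ts'.Chain' (fun s u => S (g s) (g u)) ∧ (ts'.map g).Nodup := by
  intro N
  induction N with
  | zero =>
    rintro (_ | ⟨t, rest⟩) hlen hne hch
    · exact absurd rfl hne
    · simp at hlen
  | succ N ih =>
    rintro (_ | ⟨t, rest⟩) hlen hne hch
    · exact absurd rfl hne
    set p : α → Bool := fun s => decide (g s ≠ g t) with hp
    set l' := rest.rtakeWhile p with hl'
    have hsuff : l' <:+ rest := List.rtakeWhile_suffix p rest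
    have hmem_l' : ∀ s ∈ l', g s ≠ g t := by
      intro s hs
      have := List.mem_rtakeWhile_imp hs
      simpa [hp] using this
    by_cases hl0 : l' = []
    · refine ⟨[t], by simp, ?_, rfl, ?_, List.isChain_singleton t, by simp⟩
      · exact (List.nil_sublist rest).cons₂ t
      · by_cases hr : rest = []
        · subst hr; rfl
        · rw [List.getLast_cons hr]
          have h2 := (List.rtakeWhile_eq_nil_iff (p := p)).1 hl0 hr
          simp only [hp, ne_eq, decide_eq_true_eq, not_not] at h2
          simp only [List.getLast_singleton]
          exact h2.symm
    · have hrest_ne : rest ≠ [] := by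
        intro h; rw [h] at hsuff; exact hl0 (List.eq_nil_of_sublist_nil hsuff.sublist)
      have hchrest : rest.Chain' (fun s u => S (g s) (g u)) := hch.tail
      have hchl' : l'.Chain' (fun s u => S (g s) (g u)) := hchrest.suffix hsuff
      have hlenl' : l'.length ≤ N := by
        have h1 : l'.length ≤ rest.length := hsuff.sublist.length_le
        simp only [List.length_cons] at hlen
        omega
      obtain ⟨ts'', hne'', hsub'', hhead'', hlast'', hch'', hnd''⟩ := ih l' hlenl' hl0 hchl'
      -- the decomposition of rest
      have hdecomp : rest.rdropWhile p ++ l' = rest := by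
        rw [hl', List.rdropWhile, List.rtakeWhile, ← List.reverse_append,
          List.takeWhile_append_dropWhile, List.reverse_reverse]
      -- junction
      have hjun : S (g t) (g (l'.head hl0)) := by
        by_cases hD : rest.rdropWhile p = []
        · have hrl : rest = l' := by rw [← hdecomp, hD, List.nil_append]
          have := List.isChain_cons.1 hch |>.1
          have h2 := this (rest.head hrest_ne) (List.head?_eq_head hrest_ne)
          have : rest.head hrest_ne = l'.head hl0 := by
            congr 1
          rwa [this] at h2
        · have hlastD : ¬ p ((rest.rdropWhile p).getLast hD) = true :=
            List.rdropWhile_last_not p rest hD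
          have hgD : g ((rest.rdropWhile p).getLast hD) = g t := by
            simpa [hp] using hlastD
          have hch2 : (rest.rdropWhile p ++ l').Chain' (fun s u => S (g s) (g u)) := by
            rw [hdecomp]; exact hchrest
          have := (List.isChain_append.1 hch2).2.2
          have h2 := this ((rest.rdropWhile p).getLast hD)
            (List.getLast?_eq_getLast hD) (l'.head hl0) (List.head?_eq_head hl0)
          rwa [hgD] at h2
      refine ⟨t :: ts'', by simp, (hsub''.trans hsuff.sublist).cons₂ t, rfl, ?_, ?_, ?_⟩
      · rw [List.getLast_cons hne'', List.getLast_cons hrest_ne, hlast'']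
        congr 1
        have h1 : rest.getLast? = some (l'.getLast hl0) := by
          conv_lhs => rw [← hdecomp]
          rw [List.getLast?_append, List.getLast?_eq_getLast hl0]
          rfl
        rw [List.getLast?_eq_getLast hrest_ne, Option.some_inj] at h1
        exact h1.symm
      · refine List.isChain_cons.2 ⟨?_, hch''⟩
        intro z hz
        rw [List.head?_eq_head hne'', Option.mem_def, Option.some_inj] at hz
        rw [← hz, hhead'']
        exact hjun
      · rw [List.map_cons]
        refine List.nodup_cons.2 ⟨?_, hnd''⟩
        intro hmem
        rw [List.mem_map] at hmem
        obtain ⟨s, hs, hgs⟩ := hmem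
        exact hmem_l' s (hsub''.subset hs) hgs



lemma fs_ssub {A B : Finset (Fin n)} (h1 : A ⊆ B) (h2 : A ≠ B) : A ⊂ B :=
  lt_iff_le_and_ne.2 ⟨h1, h2⟩

lemma main (hUopen : ∀ i, IsOpen (U i)) (hUconv : ∀ i, Convex ℝ (U i)) :
    ∀ k : ℕ, ∀ a b : ℝ, a < b → muu U x y a b ≤ k →
    ∃ ts : List ℝ, ∃ hne : ts ≠ [],
      ts.Pairwise (· < ·) ∧ (∀ t ∈ ts, t ∈ Icc a b) ∧
      ts.Chain' (fun s u => cw U x y s ⊂ cw U x y u ∨ cw U x y u ⊂ cw U x y s) ∧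
      cw U x y (ts.head hne) = cw U x y a ∧ cw U x y (ts.getLast hne) = cw U x y b := by
  intro k
  induction k using Nat.strong_induction_on with
  | _ k ih =>
  intro a b hab hmu
  obtain ⟨ρ, hρ1, hρ2⟩ := cw_right U x y hUopen hUconv a
  obtain ⟨e, he, hIoo⟩ := mem_nhdsGT_iff_exists_Ioo_subset.1 hρ2
  rw [mem_Ioi] at he
  set T : Set ℝ := {s | s ∈ Ioc a b ∧ ∀ v ∈ Ioo a s, cw U x y v = ρ} with hT
  have hs0 : min e b ∈ T := by
    refine ⟨⟨lt_min he hab, min_le_right _ _⟩, ?_⟩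
    intro v hv
    exact hIoo ⟨hv.1, lt_of_lt_of_le hv.2 (min_le_left _ _)⟩
  have hTne : T.Nonempty := ⟨_, hs0⟩
  have hTbdd : BddAbove T := ⟨b, fun s hs => hs.1.2⟩
  set c := sSup T with hc
  have hcb : c ≤ b := csSup_le hTne (fun s hs => hs.1.2)
  have hac : a < c := lt_of_lt_of_le (lt_min he hab) (le_csSup hTbdd hs0)
  have hconst : ∀ v ∈ Ioo a c, cw U x y v = ρ := by
    intro v hv
    obtain ⟨s, hsT, hvs⟩ := exists_lt_of_lt_csSup hTne hv.2
    exact hsT.2 v ⟨hv.1, hvs⟩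
  have hcwc : cw U x y c ⊆ ρ := by
    obtain ⟨ρ₃, h1, h2⟩ := cw_left U x y hUopen hUconv c
    obtain ⟨s, hs1, hs2⟩ := (h2.and (Filter.eventually_of_mem
      (Ioo_mem_nhdsLT hac) (fun q hq => hq))).exists
    rw [hconst s hs2] at hs1
    exact hs1 ▸ h1
  set pa := (a + c) / 2 with hpa
  have hpa1 : a < pa := by rw [hpa]; linarith
  have hpa2 : pa < c := by rw [hpa]; linarith
  have hcwpa : cw U x y pa = ρ := hconst pa ⟨hpa1, hpa2⟩
  rcases eq_or_lt_of_le hcb with hceq | hclt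
  · -- c = b
    have hβ : cw U x y b ⊆ ρ := hceq ▸ hcwc
    have hpab : pa < b := hceq ▸ hpa2
    set M : List ℝ := if cw U x y b = ρ then [pa] else [pa, b] with hM
    have hMne : M ≠ [] := by
      rw [hM]; split_ifs <;> simp
    have hMpw : M.Pairwise (· < ·) := by
      rw [hM]; split_ifs <;> simp [hpab]
    have hMmem : ∀ s ∈ M, a < s ∧ s ≤ b := by
      rw [hM]; split_ifs <;> intro s hs <;> simp at hs
      · rw [hs]; exact ⟨hpa1, hpab.le⟩
      · rcases hs with h | h
        · rw [h]; exact ⟨hpa1, hpab.le⟩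
        · rw [h]; exact ⟨hab, le_refl b⟩
    have hMch : M.Chain' (fun s u => cw U x y s ⊂ cw U x y u ∨ cw U x y u ⊂ cw U x y s) := by
      rw [hM]; split_ifs with hB
      · exact List.isChain_singleton _
      · simp only [List.Chain', List.isChain_cons_cons, List.isChain_singleton, and_true]
        rw [hcwpa]
        exact Or.inr (fs_ssub hβ hB)
    have hMhead? : M.head? = some pa := by
      rw [hM]; split_ifs <;> rfl
    have hMheadEq : M.head hMne = pa :=
      Option.some.inj ((List.head?_eq_head hMne).symm.trans hMhead?)
    have hMhead : cw U x y (M.head hMne) = ρ := by rw [hMheadEq]; exact hcwpa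
    have hMlast? : (M.getLast?).map (cw U x y) = some (cw U x y b) := by
      rw [hM]; split_ifs with hB
      · show some (cw U x y pa) = _
        rw [hcwpa, hB]
      · rfl
    have hMlast : cw U x y (M.getLast hMne) = cw U x y b := by
      rw [List.getLast?_eq_getLast hMne, Option.map_some] at hMlast?
      exact Option.some.inj hMlast?
    by_cases hA : cw U x y a = ρ
    · refine ⟨M, hMne, hMpw, ?_, hMch, ?_, hMlast⟩
      · exact fun t ht => ⟨(hMmem t ht).1.le, (hMmem t ht).2⟩
      · rw [hMhead, hA]
    · obtain ⟨hpw2, hch2⟩ := extend_aux hMne hMpw hMch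
        (fun s hs => (hMmem s hs).1) (by rw [hMhead]; exact Or.inl (fs_ssub hρ1 hA))
      refine ⟨a :: M, by simp, hpw2, ?_, hch2, by simp, ?_⟩
      · intro t ht
        rcases List.mem_cons.1 ht with h | h
        · rw [h]; exact ⟨le_refl a, hab.le⟩
        · exact ⟨(hMmem t h).1.le, (hMmem t h).2⟩
      · rw [List.getLast_cons hMne]
        exact hMlast
  · -- c < b
    obtain ⟨ρ₂, hγ2, hρ₂⟩ := cw_right U x y hUopen hUconv c
    obtain ⟨e₂, he₂, hIoo₂⟩ := mem_nhdsGT_iff_exists_Ioo_subset.1 hρ₂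
    rw [mem_Ioi] at he₂
    set m2 := min e₂ b with hm2
    have hcm2 : c < m2 := lt_min he₂ hclt
    set u' := (c + m2) / 2 with hu'
    have hcu' : c < u' := by rw [hu']; linarith
    have hu'm2 : u' < m2 := by rw [hu']; linarith
    have hu'b : u' < b := lt_of_lt_of_le hu'm2 (min_le_right _ _)
    have hu'e₂ : u' < e₂ := lt_of_lt_of_le hu'm2 (min_le_left _ _)
    have hcwu' : cw U x y u' = ρ₂ := hIoo₂ ⟨hcu', hu'e₂⟩
    set pu := (c + u') / 2 with hpu
    have hcpu : c < pu := by rw [hpu]; linarith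
    have hpuu' : pu < u' := by rw [hpu]; linarith
    have hcwpu : cw U x y pu = ρ₂ := hIoo₂ ⟨hcpu, lt_trans hpuu' hu'e₂⟩
    have hfa : ∀ i ∈ ρ, fp x y pa ∈ U i := fun i hi =>
      (mem_cw U x y).1 (by rw [hcwpa]; exact hi)
    have hfa' : ∀ i, i ∉ ρ → fp x y pa ∉ U i := fun i hi hmem =>
      hi (by rw [← hcwpa]; exact (mem_cw U x y).2 hmem)
    have hfu : ∀ i ∈ ρ₂, fp x y pu ∈ U i := fun i hi =>
      (mem_cw U x y).1 (by rw [hcwpu]; exact hi)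
    have hfu' : ∀ i, i ∉ ρ₂ → fp x y pu ∉ U i := fun i hi hmem =>
      hi (by rw [← hcwpu]; exact (mem_cw U x y).2 hmem)
    have hρne : ρ₂ ≠ ρ := by
      intro hcontra
      have hccw : cw U x y c = ρ := by
        apply Finset.Subset.antisymm hcwc
        intro i hi
        exact (mem_cw U x y).2 (fp_between U x y hUconv hpa2.le hcpu.le
          (hfa i hi) (hfu i (hcontra ▸ hi)))
      have hm2T : m2 ∈ T := by
        refine ⟨⟨lt_trans hac hcm2, min_le_right _ _⟩, ?_⟩
        intro v hv
        rcases lt_trichotomy v c with h | h | h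
        · exact hconst v ⟨hv.1, h⟩
        · rw [h]; exact hccw
        · rw [hIoo₂ ⟨h, lt_of_lt_of_le hv.2 (min_le_left _ _)⟩, hcontra]
      exact absurd (le_csSup hTbdd hm2T) (not_le.2 hcm2)
    have hau' : a ≤ u' := (lt_trans hac hcu').le
    have hapu : a < pu := lt_trans hac hcpu
    have hpub : pu < b := lt_trans hpuu' hu'b
    have hpapu : pa < pu := lt_trans hpa2 hcpu
    have hoff : ∀ i ∈ ρ, i ∉ ρ₂ → ∀ s, u' ≤ s → fp x y s ∉ U i := by
      intro i hiρ hiρ₂ s hs hmem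
      exact hfu' i hiρ₂ (fp_between U x y hUconv hpapu.le (hpuu'.trans_le hs).le
        (hfa i hiρ) hmem)
    have hlt : muu U x y u' b < muu U x y a b := by
      classical
      rw [muu, muu]
      have hterm := fun i => term_mono U x y (a := a) (a' := u') (b := b) (i := i) hau'
      apply Finset.sum_lt_sum (fun i _ => hterm i)
      obtain ⟨i, hi⟩ : ∃ i, (i ∈ ρ ∧ i ∉ ρ₂) ∨ (i ∈ ρ₂ ∧ i ∉ ρ) := by
        by_contra hno
        push_neg at hno
        apply hρne
        ext j
        have := hno j
        exact ⟨this.2, this.1⟩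
      refine ⟨i, Finset.mem_univ i, ?_⟩
      rcases hi with ⟨h1, h2⟩ | ⟨h1, h2⟩
      · have hev2ab : ev2 U x y i a b := ⟨pu, ⟨hapu, hpub⟩, hfu' i h2,
          pa, ⟨hpa1, hpapu⟩, hfa i h1⟩
        have hnev1 : ¬ ev1 U x y i u' b := by
          rintro ⟨s, hs, hsU, -⟩
          exact hoff i h1 h2 s hs.1.le hsU
        have hnev2 : ¬ ev2 U x y i u' b := by
          rintro ⟨s, hs, hsU, p, hp, hpU⟩
          exact hoff i h1 h2 p hp.1.le hpU
        rw [if_pos hev2ab, if_neg hnev1, if_neg hnev2]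
        split_ifs <;> omega
      · have hev1ab : ev1 U x y i a b := ⟨pu, ⟨hapu, hpub⟩, hfu i h1,
          pa, ⟨hpa1, hpapu⟩, hfa' i h2⟩
        have hnev1 : ¬ ev1 U x y i u' b := by
          rintro ⟨s, hs, hsU, p, hp, hpU⟩
          exact hpU (fp_between U x y hUconv (hpuu'.trans hp.1).le hp.2.le
            (hfu i h1) hsU)
        have hmono : ev2 U x y i u' b → ev2 U x y i a b := ev2_mono U x y hau'
        rw [if_pos hev1ab, if_neg hnev1]
        split_ifs with h' h''
        · omega
        · exact absurd (hmono h') h''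
        · omega
        · omega
    obtain ⟨ts', hne', hpw', hIcc', hch', hhead', hlast'⟩ :=
      ih (muu U x y u' b) (lt_of_lt_of_le hlt hmu) u' b hu'b le_rfl
    have hheadcw : cw U x y (ts'.head hne') = ρ₂ := by rw [hhead', hcwu']
    have hts'lb : ∀ s ∈ ts', pa < s := fun s hs =>
      lt_of_lt_of_le (lt_trans hpa2 hcu') (hIcc' s hs).1
    have hkey : ∃ L2 : List ℝ, ∃ hne2 : L2 ≠ [],
        L2.Pairwise (· < ·) ∧ (∀ s ∈ L2, pa < s ∧ s ≤ b) ∧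
        L2.Chain' (fun s u => cw U x y s ⊂ cw U x y u ∨ cw U x y u ⊂ cw U x y s) ∧
        (ρ ⊂ cw U x y (L2.head hne2) ∨ cw U x y (L2.head hne2) ⊂ ρ) ∧
        cw U x y (L2.getLast hne2) = cw U x y b := by
      by_cases hγ1 : cw U x y c = ρ
      · refine ⟨ts', hne', hpw', ?_, hch', ?_, hlast'⟩
        · exact fun s hs => ⟨hts'lb s hs, (hIcc' s hs).2⟩
        · rw [hheadcw]
          exact Or.inl (fs_ssub (hγ1 ▸ hγ2) hρne.symm)
      · by_cases hγ3 : cw U x y c = ρ₂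
        · refine ⟨ts', hne', hpw', ?_, hch', ?_, hlast'⟩
          · exact fun s hs => ⟨hts'lb s hs, (hIcc' s hs).2⟩
          · rw [hheadcw]
            exact Or.inr (fs_ssub (hγ3 ▸ hcwc) hρne)
        · have hclt' : ∀ s ∈ ts', c < s := fun s hs =>
            lt_of_lt_of_le hcu' (hIcc' s hs).1
          obtain ⟨hpw2, hch2⟩ := extend_aux hne' hpw' hch' hclt'
            (by rw [hheadcw]; exact Or.inl (fs_ssub hγ2 hγ3))
          refine ⟨c :: ts', by simp, hpw2, ?_, hch2, ?_, ?_⟩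
          · intro s hs
            rcases List.mem_cons.1 hs with h | h
            · rw [h]; exact ⟨hpa2, hcb⟩
            · exact ⟨hts'lb s h, (hIcc' s h).2⟩
          · simp only [List.head_cons]
            exact Or.inr (fs_ssub hcwc hγ1)
          · rw [List.getLast_cons hne']; exact hlast'
    obtain ⟨L2, hne2, hpw2, hmem2, hch2, hsc2, hlast2⟩ := hkey
    obtain ⟨hpw3, hch3⟩ := extend_aux hne2 hpw2 hch2 (fun s hs => (hmem2 s hs).1)
      (by rw [hcwpa]; exact hsc2)
    by_cases hA : cw U x y a = ρ
    · refine ⟨pa :: L2, by simp, hpw3, ?_, hch3, ?_, ?_⟩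
      · intro s hs
        rcases List.mem_cons.1 hs with h | h
        · rw [h]; exact ⟨hpa1.le, hpa2.le.trans hcb⟩
        · exact ⟨(hpa1.trans (hmem2 s h).1).le, (hmem2 s h).2⟩
      · simp only [List.head_cons]
        rw [hcwpa, hA]
      · rw [List.getLast_cons hne2]; exact hlast2
    · have hne3 : pa :: L2 ≠ [] := by simp
      obtain ⟨hpw4, hch4⟩ := extend_aux hne3 hpw3 hch3
        (by
          intro s hs
          rcases List.mem_cons.1 hs with h | h
          · rw [h]; exact hpa1
          · exact hpa1.trans (hmem2 s h).1)
        (by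
          simp only [List.head_cons]
          rw [hcwpa]
          exact Or.inl (fs_ssub hρ1 hA))
      refine ⟨a :: pa :: L2, by simp, hpw4, ?_, hch4, ?_, ?_⟩
      · intro s hs
        rcases List.mem_cons.1 hs with h | h
        · rw [h]; exact ⟨le_refl a, hab.le⟩
        · rcases List.mem_cons.1 h with h2 | h2
          · rw [h2]; exact ⟨hpa1.le, hpa2.le.trans hcb⟩
          · exact ⟨(hpa1.trans (hmem2 s h2).1).le, (hmem2 s h2).2⟩
      · simp only [List.head_cons]
      · rw [List.getLast_cons hne3, List.getLast_cons hne2]; exact hlast2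



end Stmt7Aux

open Stmt7Aux in
/-- If `v` is forced between `σ` and `τ` (every feasible path in `G_C` from `σ` to `τ`
passes through `v`), then in any convex open realization of `C`, any segment from a
point of `A_σ` to a point of `A_τ` meets the atom of `v`. -/
theorem stmt_7 {d n : ℕ} (C : Set (Finset (Fin n))) (σ τ v : Finset (Fin n))
    (hσ : σ ∈ C) (hτ : τ ∈ C) (hv : v ∈ C)
    (hforced : ∀ w : List (Finset (Fin n)), IsWalk C w → Feasible w → w.Nodup →
      w.head? = some σ → w.getLast? = some τ → v ∈ w)
    (U : Fin n → Set (Fin d → ℝ))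
    (hUopen : ∀ i, IsOpen (U i)) (hUconv : ∀ i, Convex ℝ (U i))
    (hreal : ∀ ρ : Finset (Fin n), (atom U ρ).Nonempty ↔ ρ ∈ C)
    (x y : Fin d → ℝ) (hx : x ∈ atom U σ) (hy : y ∈ atom U τ) :
    ∃ z ∈ segment ℝ x y, z ∈ atom U v := by
  classical
  have hfp0 : fp x y 0 = x := by unfold fp; simp
  have hfp1 : fp x y 1 = y := by unfold fp; simp
  have hcw0 : cw U x y 0 = σ := by
    ext i
    rw [mem_cw U x y, hfp0]
    exact (hx i).symm
  have hcw1 : cw U x y 1 = τ := by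
    ext i
    rw [mem_cw U x y, hfp1]
    exact (hy i).symm
  have hCmem : ∀ t : ℝ, cw U x y t ∈ C := by
    intro t
    rw [← hreal]
    exact ⟨fp x y t, fun i => mem_cw U x y⟩
  obtain ⟨ts, hne, hpw, hIcc, hch, hhead, hlast⟩ :=
    main U x y hUopen hUconv (muu U x y 0 1) 0 1 one_pos le_rfl
  obtain ⟨ts', hne', hsub, hhead', hlast', hch', hnd⟩ :=
    erase_walk (cw U x y) (fun A B => A ⊂ B ∨ B ⊂ A) ts.length ts le_rfl hne hch
  have hpw' : ts'.Pairwise (· < ·) := hpw.sublist hsub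
  have hwne : ts'.map (cw U x y) ≠ [] := by simp [hne']
  have hwalk : IsWalk C (ts'.map (cw U x y)) := by
    refine ⟨hwne, ?_, (List.isChain_map _).2 hch'⟩
    intro ρ hρ
    obtain ⟨t, ht, hvt⟩ := List.mem_map.1 hρ
    exact hvt ▸ hCmem t
  have hfeas : Feasible (ts'.map (cw U x y)) := by
    intro i m j h1 h2
    have hi : (i : ℕ) < ts'.length := by simpa using i.isLt
    have hm : (m : ℕ) < ts'.length := by simpa using m.isLt
    have hj : (j : ℕ) < ts'.length := by simpa using j.isLt
    simp only [List.get_eq_getElem, List.getElem_map]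
    apply cw_between U x y hUconv
    · exact (List.pairwise_iff_getElem.1 hpw' _ _ hi hm h1).le
    · exact (List.pairwise_iff_getElem.1 hpw' _ _ hm hj h2).le
  have hheadw : (ts'.map (cw U x y)).head? = some σ := by
    rw [List.head?_map, List.head?_eq_head hne', Option.map_some, hhead', hhead, hcw0]
  have hlastw : (ts'.map (cw U x y)).getLast? = some τ := by
    rw [List.getLast?_map, List.getLast?_eq_getLast hne', Option.map_some, hlast', hlast, hcw1]
  have hvmem := hforced (ts'.map (cw U x y)) hwalk hfeas hnd hheadw hlastw
  obtain ⟨t, ht, hvt⟩ := List.mem_map.1 hvmem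
  have htIcc : t ∈ Set.Icc (0:ℝ) 1 := hIcc t (hsub.subset ht)
  refine ⟨fp x y t, ?_, ?_⟩
  · rw [segment_eq_image' ℝ x y]
    exact ⟨t, htIcc, rfl⟩
  · intro i
    rw [← hvt]
    exact mem_cw U x y
end

section
/- Every feasible walk in the codeword graph G_C from σ to τ contains a feasible path (a feasible walk with pairwise distinct vertices) from σ to τ as a subsequence. -/
/-- Index map for removing the segment `(i, j]` from a list. -/
def psiIdx (i j k : ℕ) : ℕ := if k ≤ i then k else j + 1 + (k - (i + 1))

lemma psiIdx_mono {i j : ℕ} (hij : i < j) {a b : ℕ} (h : a < b) :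
    psiIdx i j a < psiIdx i j b := by
  unfold psiIdx; split <;> split <;> omega

lemma cut_length {α : Type*} (w : List α) {i j : ℕ} (hij : i < j) (hj : j < w.length) :
    (w.take (i+1) ++ w.drop (j+1)).length = (i+1) + (w.length - (j+1)) := by
  simp [List.length_take, List.length_drop]
  omega

lemma psiIdx_lt {α : Type*} (w : List α) {i j k : ℕ} (hij : i < j) (hj : j < w.length)
    (hk : k < (w.take (i+1) ++ w.drop (j+1)).length) : psiIdx i j k < w.length := by
  rw [cut_length w hij hj] at hk
  unfold psiIdx; split <;> omega

lemma cut_get {α : Type*} (w : List α) {i j k : ℕ} (hij : i < j) (hj : j < w.length)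
    (hk : k < (w.take (i+1) ++ w.drop (j+1)).length) :
    (w.take (i+1) ++ w.drop (j+1))[k] = w[psiIdx i j k]'(psiIdx_lt w hij hj hk) := by
  by_cases h : k ≤ i
  · have h1 : k < (w.take (i+1)).length := by
      simp [List.length_take]; omega
    rw [List.getElem_append_left h1, List.getElem_take]
    simp only [psiIdx, if_pos h]
  · have h1 : (w.take (i+1)).length ≤ k := by
      simp [List.length_take]; omega
    rw [List.getElem_append_right h1, List.getElem_drop]
    have e : (j + 1) + (k - (w.take (i+1)).length) = psiIdx i j k := by
      simp only [List.length_take, psiIdx, if_neg h]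
      have : min (i+1) w.length = i + 1 := by omega
      omega
    congr 1

lemma loop_remove {α : Type*} [DecidableEq α] (C : Set (Finset α)) (w : List (Finset α))
    (hwalk : IsWalk C w) (hfeas : Feasible w) {i j : ℕ} (hij : i < j) (hj : j < w.length)
    (heq : w[i]'(by omega) = w[j]'hj) :
    (w.take (i+1) ++ w.drop (j+1)).Sublist w ∧ IsWalk C (w.take (i+1) ++ w.drop (j+1)) ∧
      Feasible (w.take (i+1) ++ w.drop (j+1)) ∧
      (w.take (i+1) ++ w.drop (j+1)).length < w.length ∧
      (w.take (i+1) ++ w.drop (j+1)).head? = w.head? ∧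
      (w.take (i+1) ++ w.drop (j+1)).getLast? = w.getLast? := by
  have hi : i < w.length := by omega
  have hlen := cut_length w hij hj
  -- sublist
  have hsub : (w.take (i+1) ++ w.drop (j+1)).Sublist w := by
    have h1 : w.drop (j+1) = (w.drop (i+1)).drop (j - i) := by
      rw [List.drop_drop]; congr 1; omega
    have h2 : (w.drop (j+1)).Sublist (w.drop (i+1)) := by
      rw [h1]; exact List.drop_sublist _ _
    calc (w.take (i+1) ++ w.drop (j+1)).Sublist (w.take (i+1) ++ w.drop (i+1)) :=
          (List.Sublist.refl _).append h2
      _ = w := List.take_append_drop _ _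
  -- length
  have hlt : (w.take (i+1) ++ w.drop (j+1)).length < w.length := by rw [hlen]; omega
  -- nonempty
  have hne : (w.take (i+1) ++ w.drop (j+1)) ≠ [] := by
    intro h
    rw [h] at hlen
    simp at hlen
    omega
  -- chain'
  have hchain := List.isChain_iff_getElem.mp hwalk.2.2
  have hchain' : (w.take (i+1) ++ w.drop (j+1)).Chain' (fun a b => a ⊂ b ∨ b ⊂ a) := by
    refine List.isChain_iff_getElem.mpr ?_
    intro k hk
    have hk1 : k < (w.take (i+1) ++ w.drop (j+1)).length := by omega
    have hk2 : k + 1 < (w.take (i+1) ++ w.drop (j+1)).length := by omega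
    rw [cut_get w hij hj hk1, cut_get w hij hj hk2]
    by_cases h1 : k + 1 ≤ i
    · have e1 : psiIdx i j k = k := by simp [psiIdx]; omega
      have e2 : psiIdx i j (k+1) = k + 1 := by simp [psiIdx, h1]
      have hlt2 : k < w.length - 1 := by omega
      have := hchain k (by omega)
      simp only [e1, e2]
      exact this
    · by_cases h2 : k ≤ i
      · -- k = i, boundary
        have e1 : psiIdx i j k = i := by simp [psiIdx, h2]; omega
        have e2 : psiIdx i j (k+1) = j + 1 := by
          simp only [psiIdx, if_neg h1]; omega
        have hjL : j + 1 < w.length := by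
          rw [hlen] at hk2; omega
        have hlt2 : j < w.length - 1 := by omega
        have := hchain j (by omega)
        simp only [e1, e2, heq]
        exact this
      · -- both in suffix
        have e1 : psiIdx i j k = j + 1 + (k - (i+1)) := by simp [psiIdx, h2]
        have e2 : psiIdx i j (k+1) = psiIdx i j k + 1 := by
          simp only [psiIdx, if_neg h1, if_neg h2]; omega
        have hlt2 : psiIdx i j k < w.length - 1 := by
          have := psiIdx_lt w hij hj hk2
          omega
        have := hchain (psiIdx i j k) (by omega)
        simp only [e2]
        exact this
  -- membership
  have hmem : ∀ v ∈ (w.take (i+1) ++ w.drop (j+1)), v ∈ C :=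
    fun v hv => hwalk.2.1 v (hsub.subset hv)
  -- feasible
  have hfeas' : Feasible (w.take (i+1) ++ w.drop (j+1)) := by
    intro a m b ham hmb
    simp only [List.get_eq_getElem]
    rw [cut_get w hij hj a.isLt, cut_get w hij hj m.isLt, cut_get w hij hj b.isLt]
    exact hfeas ⟨psiIdx i j a, psiIdx_lt w hij hj a.isLt⟩
      ⟨psiIdx i j m, psiIdx_lt w hij hj m.isLt⟩
      ⟨psiIdx i j b, psiIdx_lt w hij hj b.isLt⟩ (psiIdx_mono hij ham) (psiIdx_mono hij hmb)
  -- head?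
  have hLpos : 0 < w.length := by omega
  have hhead : (w.take (i+1) ++ w.drop (j+1)).head? = w.head? := by
    rw [List.head?_eq_getElem?, List.head?_eq_getElem?]
    have h0 : 0 < (w.take (i+1) ++ w.drop (j+1)).length := by omega
    rw [List.getElem?_eq_getElem h0, List.getElem?_eq_getElem hLpos]
    rw [cut_get w hij hj h0]
    have e : psiIdx i j 0 = 0 := by simp [psiIdx]
    simp only [e]
  -- getLast?
  have hlast : (w.take (i+1) ++ w.drop (j+1)).getLast? = w.getLast? := by
    rw [List.getLast?_eq_getElem?, List.getLast?_eq_getElem?]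
    have hK : (w.take (i+1) ++ w.drop (j+1)).length - 1 <
        (w.take (i+1) ++ w.drop (j+1)).length := by omega
    have hK' : w.length - 1 < w.length := by omega
    rw [List.getElem?_eq_getElem hK, List.getElem?_eq_getElem hK']
    rw [cut_get w hij hj hK]
    by_cases hdrop : j + 1 = w.length
    · have e : psiIdx i j ((w.take (i+1) ++ w.drop (j+1)).length - 1) = i := by
        rw [hlen]; simp only [psiIdx]; split <;> omega
      have ej : w.length - 1 = j := by omega
      simp only [e, ej, heq]
    · have e : psiIdx i j ((w.take (i+1) ++ w.drop (j+1)).length - 1) = w.length - 1 := by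
        rw [hlen]; simp only [psiIdx]
        split <;> omega
      simp only [e]
  exact ⟨hsub, ⟨hne, hmem, hchain'⟩, hfeas', hlt, hhead, hlast⟩

lemma stmt_aux {α : Type*} [DecidableEq α] :
    ∀ (N : ℕ) (C : Set (Finset α)) (w : List (Finset α)), w.length ≤ N →
    IsWalk C w → Feasible w →
    ∃ p : List (Finset α), p.Sublist w ∧ IsWalk C p ∧ Feasible p ∧ p.Nodup ∧
      p.head? = w.head? ∧ p.getLast? = w.getLast? := by
  intro N
  induction N with
  | zero =>
    intro C w hN hwalk _
    have : w = [] := List.length_eq_zero_iff.mp (Nat.le_zero.mp hN)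
    exact absurd this hwalk.1
  | succ N ih =>
    intro C w hN hwalk hfeas
    by_cases hnd : w.Nodup
    · exact ⟨w, List.Sublist.refl _, hwalk, hfeas, hnd, rfl, rfl⟩
    · rw [List.nodup_iff_injective_get] at hnd
      simp only [Function.Injective, not_forall] at hnd
      obtain ⟨a, b, hab, hne⟩ := hnd
      have hne' : (a : ℕ) ≠ (b : ℕ) := fun h => hne (Fin.ext h)
      obtain ⟨i, j, hij, hj, heq⟩ :
          ∃ i j : ℕ, ∃ (_ : i < j) (hj : j < w.length),
            w[i]'(by omega) = w[j]'hj := by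
        rcases Nat.lt_or_ge (a : ℕ) (b : ℕ) with h | h
        · exact ⟨a, b, h, b.isLt, by simpa [List.get_eq_getElem] using hab⟩
        · have h' : (b : ℕ) < (a : ℕ) := by omega
          exact ⟨b, a, h', a.isLt, by simpa [List.get_eq_getElem] using hab.symm⟩
      obtain ⟨hsub, hwalk', hfeas', hlt, hhead, hlast⟩ :=
        loop_remove C w hwalk hfeas hij hj heq
      have hN' : (w.take (i+1) ++ w.drop (j+1)).length ≤ N := by omega
      obtain ⟨p, hp1, hp2, hp3, hp4, hp5, hp6⟩ := ih C _ hN' hwalk' hfeas'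
      exact ⟨p, hp1.trans hsub, hp2, hp3, hp4, hp5.trans hhead, hp6.trans hlast⟩

/-- Every feasible walk in `G_C` from `σ` to `τ` contains a feasible path (a feasible
walk with pairwise distinct vertices) from `σ` to `τ` as a subsequence. -/
theorem stmt_8 {n : ℕ} (C : Set (Finset (Fin n))) (w : List (Finset (Fin n)))
    (hwalk : IsWalk C w) (hfeas : Feasible w) :
    ∃ p : List (Finset (Fin n)), p.Sublist w ∧ IsWalk C p ∧ Feasible p ∧ p.Nodup ∧
      p.head? = w.head? ∧ p.getLast? = w.getLast? := by
  exact stmt_aux w.length C w le_rfl hwalk hfeas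
end

section
/- The code C = {{1,2,3},{2,3,4},{3,4,5},{1,4,5},{1,2,5},{1,2},{2,3},{3,4},{4,5},{1,5},∅} ⊆ 2^{[5]} has no realization by closed convex sets in any ℝ^d. That is, there do not exist closed convex sets U₁,...,U₅ ⊆ ℝ^d such that for every σ ⊆ [5], the atom A_σ = ⋂_{i∈σ}U_i ∖ ⋃_{j∉σ}U_j is nonempty if and only if σ ∈ C. -/
/-- The atom of `σ ⊆ N` with respect to `U`, relative to the ground set `N`. -/
def atomOn {X : Type*} (N : Finset ℕ) (U : ℕ → Set X) (σ : Finset ℕ) : Set X :=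
  {x | ∀ i ∈ N, (i ∈ σ ↔ x ∈ U i)}

def wheelCode : Set (Finset ℕ) :=
  {{1,2,3}, {2,3,4}, {3,4,5}, {1,4,5}, {1,2,5}, {1,2}, {2,3}, {3,4}, {4,5}, {1,5}, ∅}

open Set

lemma rel_of_sameRay {E : Type*} [NormedAddCommGroup E] [InnerProductSpace ℝ E]
    {a b : ℝ} {u w : E} (h : SameRay ℝ (a • u) (b • w)) (ha : 0 < a) (hb : 0 < b)
    (hu : u ≠ 0) (hw : w ≠ 0) : ∃ k : ℝ, 0 < k ∧ w = k • u := by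
  obtain ⟨r, s, hr, hs, heq⟩ := h.exists_pos (smul_ne_zero ha.ne' hu) (smul_ne_zero hb.ne' hw)
  rw [smul_smul, smul_smul] at heq
  have hsb : s * b ≠ 0 := by positivity
  refine ⟨(s * b)⁻¹ * (r * a), by positivity, ?_⟩
  rw [mul_smul, heq, inv_smul_smul₀ hsb]

lemma no_cycle {E : Type*} [NormedAddCommGroup E] [InnerProductSpace ℝ E]
    (D : Fin 5 → Set E)
    (hcl : ∀ i, IsClosed (D i)) (hcv : ∀ i, Convex ℝ (D i)) (hne : ∀ i, (D i).Nonempty)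
    (hd1 : ∀ i, Disjoint (D i) (D (i+1))) (hd2 : ∀ i, Disjoint (D i) (D (i+2)))
    (hb : ∀ i, ∀ p ∈ D i, ∀ q ∈ D (i+2), (D (i+1) ∩ segment ℝ p q).Nonempty) : False := by
  classical
  choose x0 hx0 using hne
  set T : Set E := convexHull ℝ (Set.range x0) with hT
  have hTcv : Convex ℝ T := convex_convexHull ℝ _
  have hTcp : IsCompact T := (Set.finite_range x0).isCompact_convexHull (𝕜 := ℝ)
  set K : Fin 5 → Set E := fun i => D i ∩ T with hK
  have hKcp : ∀ i, IsCompact (K i) := fun i => hTcp.inter_left (hcl i)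
  have hKne : ∀ i, x0 i ∈ K i := fun i => ⟨hx0 i, subset_convexHull ℝ _ ⟨i, rfl⟩⟩
  have hΩcp : IsCompact (Set.univ.pi K) := isCompact_univ_pi hKcp
  have hΩne : (Set.univ.pi K).Nonempty := ⟨x0, fun i _ => hKne i⟩
  set g : (Fin 5 → E) → ℝ := fun f => ∑ i : Fin 5, ‖f i - f (i + 2)‖ with hg
  have hgc : Continuous g := by
    apply continuous_finset_sum
    intro i _
    exact ((continuous_apply i).sub (continuous_apply (i + 2))).norm
  obtain ⟨x, hxΩ, hmin⟩ := hΩcp.exists_isMinOn hΩne hgc.continuousOn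
  have hxK : ∀ i, x i ∈ K i := fun i => hxΩ i (mem_univ i)
  have hxD : ∀ i, x i ∈ D i := fun i => (hxK i).1
  have hxT : ∀ i, x i ∈ T := fun i => (hxK i).2
  -- blocking points with strict parameters
  have hW : ∀ i : Fin 5, ∃ t : ℝ, 0 < t ∧ t < 1 ∧ (x i + t • (x (i+2) - x i)) ∈ D (i+1) := by
    intro i
    obtain ⟨w, hwD, hwseg⟩ := hb i (x i) (hxD i) (x (i+2)) (hxD (i+2))
    rw [segment_eq_image'] at hwseg
    obtain ⟨tt, ⟨ht0, ht1⟩, hteq⟩ := hwseg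
    have hteq' : x i + tt • (x (i+2) - x i) = w := hteq
    refine ⟨tt, ?_, ?_, by rw [hteq']; exact hwD⟩
    · rcases ht0.eq_or_lt with h | h
      · exfalso
        apply Disjoint.ne_of_mem (hd1 i) (hxD i) hwD
        rw [← hteq', ← h, zero_smul, add_zero]
      · exact h
    · rcases ht1.eq_or_lt with h | h
      · exfalso
        have hw2 : w = x (i+2) := by rw [← hteq', h, one_smul]; abel
        have h12 : ∀ j : Fin 5, j + 1 + 1 = j + 2 := by decide
        refine Disjoint.ne_of_mem (hd1 (i+1)) hwD ?_ hw2
        rw [h12 i]; exact hxD (i+2)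
      · exact h
  choose t ht0 ht1 hwD using hW
  set w : Fin 5 → E := fun i => x i + t i • (x (i+2) - x i) with hw
  have hwT : ∀ i, w i ∈ T := by
    intro i
    apply hTcv.segment_subset (hxT i) (hxT (i+2))
    rw [segment_eq_image']
    exact ⟨t i, ⟨(ht0 i).le, (ht1 i).le⟩, rfl⟩
  set y : Fin 5 → E := fun j => w (j - 1) with hy
  have hsub : ∀ j : Fin 5, j - 1 + 1 = j := by decide
  have hsub2 : ∀ j : Fin 5, j - 1 + 2 = j + 1 := by decide
  have hsub3 : ∀ j : Fin 5, j + 2 - 1 = j + 1 := by decide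
  have hyΩ : y ∈ Set.univ.pi K := by
    intro j _
    refine ⟨?_, hwT (j - 1)⟩
    have := hwD (j - 1)
    rwa [hsub j] at this
  have hgy : g x ≤ g y := hmin hyΩ
  have hsub4 : ∀ j : Fin 5, j + 1 + 2 = j + 3 := by decide
  -- vector identity
  have hvy : ∀ i : Fin 5, y i - y (i + 2) =
      (1 - t (i-1)) • (x (i-1) - x (i+1)) + t (i+1) • (x (i+1) - x (i+3)) := by
    intro i
    have e1 : y i = x (i-1) + t (i-1) • (x (i+1) - x (i-1)) := by
      show x (i-1) + t (i-1) • (x ((i-1)+2) - x (i-1)) = _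
      rw [hsub2 i]
    have e2 : y (i+2) = x (i+1) + t (i+1) • (x (i+3) - x (i+1)) := by
      show w (i+2-1) = _
      rw [hsub3 i]
      show x (i+1) + t (i+1) • (x ((i+1)+2) - x (i+1)) = _
      rw [hsub4 i]
    rw [e1, e2]
    module
  have hnorm : ∀ i : Fin 5, ‖y i - y (i+2)‖ ≤
      (1 - t (i-1)) * ‖x (i-1) - x (i+1)‖ + t (i+1) * ‖x (i+1) - x (i+3)‖ := by
    intro i
    rw [hvy i]
    refine (norm_add_le _ _).trans (le_of_eq ?_)
    rw [norm_smul, norm_smul, Real.norm_eq_abs, Real.norm_eq_abs,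
      abs_of_pos (by linarith [ht1 (i-1)]), abs_of_pos (ht0 (i+1))]
  have hne' : ∀ j : Fin 5, x j - x (j+2) ≠ 0 :=
    fun j => sub_ne_zero.mpr (Disjoint.ne_of_mem (hd2 j) (hxD j) (hxD (j+2)))
  -- instantiate
  have h0 := hnorm 0; have h1 := hnorm 1; have h2 := hnorm 2
  have h3 := hnorm 3; have h4 := hnorm 4
  have hv0 := hvy 0; have hv1 := hvy 1; have hv2 := hvy 2
  have hv3 := hvy 3; have hv4 := hvy 4
  have n0 := hne' 0; have n1 := hne' 1; have n2 := hne' 2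
  have n3 := hne' 3; have n4 := hne' 4
  simp only [Fin.reduceAdd, Fin.reduceSub] at h0 h1 h2 h3 h4 hv0 hv1 hv2 hv3 hv4 n0 n1 n2 n3 n4
  have hgx5 : g x = ‖x 0 - x 2‖ + ‖x 1 - x 3‖ + ‖x 2 - x 4‖ + ‖x 3 - x 0‖ + ‖x 4 - x 1‖ := by
    simp only [hg, Fin.sum_univ_five, Fin.reduceAdd]
  have hgy5 : g y = ‖y 0 - y 2‖ + ‖y 1 - y 3‖ + ‖y 2 - y 4‖ + ‖y 3 - y 0‖ + ‖y 4 - y 1‖ := by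
    simp only [hg, Fin.sum_univ_five, Fin.reduceAdd]
  rw [hgx5, hgy5] at hgy
  -- equalities
  have E0 : ‖y 0 - y 2‖ = (1 - t 4) * ‖x 4 - x 1‖ + t 1 * ‖x 1 - x 3‖ := by linarith
  have E1 : ‖y 1 - y 3‖ = (1 - t 0) * ‖x 0 - x 2‖ + t 2 * ‖x 2 - x 4‖ := by linarith
  have E2 : ‖y 2 - y 4‖ = (1 - t 1) * ‖x 1 - x 3‖ + t 3 * ‖x 3 - x 0‖ := by linarith
  have E3 : ‖y 3 - y 0‖ = (1 - t 2) * ‖x 2 - x 4‖ + t 4 * ‖x 4 - x 1‖ := by linarith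
  have E4 : ‖y 4 - y 1‖ = (1 - t 3) * ‖x 3 - x 0‖ + t 0 * ‖x 0 - x 2‖ := by linarith
  -- same ray statements
  have mkray : ∀ (a b : ℝ) (u v yv : E), yv = a • u + b • v → 0 < a → 0 < b →
      ‖yv‖ = a * ‖u‖ + b * ‖v‖ → SameRay ℝ (a • u) (b • v) := by
    intro a b u v yv hid ha hb hn
    apply sameRay_iff_norm_add.mpr
    rw [← hid, norm_smul, norm_smul, Real.norm_eq_abs, Real.norm_eq_abs,
      abs_of_pos ha, abs_of_pos hb, hn]
  have S0 := mkray (1 - t 4) (t 1) (x 4 - x 1) (x 1 - x 3) _ hv0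
    (by linarith [ht1 4]) (ht0 1) E0
  have S1 := mkray (1 - t 0) (t 2) (x 0 - x 2) (x 2 - x 4) _ hv1
    (by linarith [ht1 0]) (ht0 2) E1
  have S2 := mkray (1 - t 1) (t 3) (x 1 - x 3) (x 3 - x 0) _ hv2
    (by linarith [ht1 1]) (ht0 3) E2
  have S3 := mkray (1 - t 2) (t 4) (x 2 - x 4) (x 4 - x 1) _ hv3
    (by linarith [ht1 2]) (ht0 4) E3
  -- extract positive multiples
  obtain ⟨k1, hk1, r1⟩ := rel_of_sameRay S1 (by linarith [ht1 0]) (ht0 2) n0 n2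
  obtain ⟨k2, hk2, r2⟩ := rel_of_sameRay S3 (by linarith [ht1 2]) (ht0 4) n2 n4
  obtain ⟨k3, hk3, r3⟩ := rel_of_sameRay S0 (by linarith [ht1 4]) (ht0 1) n4 n1
  obtain ⟨k4, hk4, r4⟩ := rel_of_sameRay S2 (by linarith [ht1 1]) (ht0 3) n1 n3
  -- r1 : x 2 - x 4 = k1 • (x 0 - x 2), r2 : x 4 - x 1 = k2 • (x 2 - x 4)
  -- r3 : x 1 - x 3 = k3 • (x 4 - x 1), r4 : x 3 - x 0 = k4 • (x 1 - x 3)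
  have hfin : (1 + k3*(k2*k1) + k1 + k4*(k3*(k2*k1)) + k2*k1) • (x 0 - x 2) = 0 := by
    calc (1 + k3*(k2*k1) + k1 + k4*(k3*(k2*k1)) + k2*k1) • (x 0 - x 2)
        = (x 0 - x 2) + (x 1 - x 3) + (x 2 - x 4) + (x 3 - x 0) + (x 4 - x 1) := by
          rw [r4, r3, r2, r1]; module
      _ = 0 := by abel
  rcases smul_eq_zero.mp hfin with hcoef | hv
  · have p1 : (0:ℝ) < k2 * k1 := mul_pos hk2 hk1
    have p2 : (0:ℝ) < k3 * (k2 * k1) := mul_pos hk3 p1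
    have p3 : (0:ℝ) < k4 * (k3 * (k2 * k1)) := mul_pos hk4 p2
    linarith
  · exact n0 hv


lemma wheel_facts (S : Finset ℕ) (hS : S ∈ wheelCode) :
    ((1 ∈ S ∧ 3 ∈ S) → (2 ∈ S ∧ 4 ∉ S ∧ 5 ∉ S)) ∧
    ((2 ∈ S ∧ 4 ∈ S) → (3 ∈ S ∧ 5 ∉ S ∧ 1 ∉ S)) ∧
    ((3 ∈ S ∧ 5 ∈ S) → (4 ∈ S ∧ 1 ∉ S ∧ 2 ∉ S)) ∧
    ((4 ∈ S ∧ 1 ∈ S) → (5 ∈ S ∧ 2 ∉ S ∧ 3 ∉ S)) ∧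
    ((5 ∈ S ∧ 2 ∈ S) → (1 ∈ S ∧ 3 ∉ S ∧ 4 ∉ S)) ∧
    (1 ∈ S → 5 ∈ S ∨ 2 ∈ S) ∧
    (2 ∈ S → 1 ∈ S ∨ 3 ∈ S) ∧
    (3 ∈ S → 2 ∈ S ∨ 4 ∈ S) ∧
    (4 ∈ S → 3 ∈ S ∨ 5 ∈ S) ∧
    (5 ∈ S → 4 ∈ S ∨ 1 ∈ S) := by
  simp only [wheelCode, Set.mem_insert_iff, Set.mem_singleton_iff] at hS
  rcases hS with rfl|rfl|rfl|rfl|rfl|rfl|rfl|rfl|rfl|rfl|rfl <;>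
    exact ⟨by decide, by decide, by decide, by decide, by decide,
      by decide, by decide, by decide, by decide, by decide⟩

section Main
variable {d : ℕ} (U : ℕ → Set (Fin d → ℝ))
  (h : ∀ σ ⊆ ({1,2,3,4,5} : Finset ℕ),
        ((atomOn {1,2,3,4,5} U σ).Nonempty ↔ σ ∈ wheelCode))

include h in
lemma master (x : Fin d → ℝ) :
    ∃ S ∈ wheelCode, ∀ j ∈ ({1,2,3,4,5} : Finset ℕ), (x ∈ U j ↔ j ∈ S) := by
  classical
  refine ⟨Finset.filter (fun i => x ∈ U i) {1,2,3,4,5}, ?_, ?_⟩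
  · refine (h _ (Finset.filter_subset _ _)).mp ⟨x, ?_⟩
    intro i hi
    simp [Finset.mem_filter, hi]
  · intro j hj
    simp [Finset.mem_filter, hj]

include h in
lemma facts (x : Fin d → ℝ) :
    ((x ∈ U 1 ∧ x ∈ U 3) → (x ∈ U 2 ∧ x ∉ U 4 ∧ x ∉ U 5)) ∧
    ((x ∈ U 2 ∧ x ∈ U 4) → (x ∈ U 3 ∧ x ∉ U 5 ∧ x ∉ U 1)) ∧
    ((x ∈ U 3 ∧ x ∈ U 5) → (x ∈ U 4 ∧ x ∉ U 1 ∧ x ∉ U 2)) ∧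
    ((x ∈ U 4 ∧ x ∈ U 1) → (x ∈ U 5 ∧ x ∉ U 2 ∧ x ∉ U 3)) ∧
    ((x ∈ U 5 ∧ x ∈ U 2) → (x ∈ U 1 ∧ x ∉ U 3 ∧ x ∉ U 4)) ∧
    (x ∈ U 1 → x ∈ U 5 ∨ x ∈ U 2) ∧
    (x ∈ U 2 → x ∈ U 1 ∨ x ∈ U 3) ∧
    (x ∈ U 3 → x ∈ U 2 ∨ x ∈ U 4) ∧
    (x ∈ U 4 → x ∈ U 3 ∨ x ∈ U 5) ∧
    (x ∈ U 5 → x ∈ U 4 ∨ x ∈ U 1) := by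
  obtain ⟨S, hS, hx⟩ := master U h x
  have h1 := hx 1 (by decide); have h2 := hx 2 (by decide); have h3 := hx 3 (by decide)
  have h4 := hx 4 (by decide); have h5 := hx 5 (by decide)
  rw [h1, h2, h3, h4, h5]
  exact wheel_facts S hS

end Main


/-- The code `wheelCode` has no realization by closed convex sets in any `ℝ^d`. -/
theorem stmt_9 (d : ℕ) (U : ℕ → Set (Fin d → ℝ))
    (hU : ∀ i ∈ ({1,2,3,4,5} : Finset ℕ), IsClosed (U i) ∧ Convex ℝ (U i)) :
    ¬ (∀ σ ⊆ ({1,2,3,4,5} : Finset ℕ),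
        ((atomOn {1,2,3,4,5} U σ).Nonempty ↔ σ ∈ wheelCode)) := by
  intro h
  set e : EuclideanSpace ℝ (Fin d) ≃L[ℝ] (Fin d → ℝ) := EuclideanSpace.equiv (Fin d) ℝ with he
  set V : ℕ → Set (EuclideanSpace ℝ (Fin d)) := fun i => e ⁻¹' U i with hV
  have hVcl : ∀ i ∈ ({1,2,3,4,5}:Finset ℕ), IsClosed (V i) :=
    fun i hi => (hU i hi).1.preimage e.continuous
  have hVcv : ∀ i ∈ ({1,2,3,4,5}:Finset ℕ), Convex ℝ (V i) :=
    fun i hi => (hU i hi).2.is_linear_preimage ⟨e.map_add, e.map_smul⟩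
  -- points in the triple atoms
  have getpt : ∀ σ : Finset ℕ, σ ⊆ ({1,2,3,4,5}:Finset ℕ) → σ ∈ wheelCode →
      ∀ a b : ℕ, a ∈ σ → b ∈ σ → a ∈ ({1,2,3,4,5}:Finset ℕ) → b ∈ ({1,2,3,4,5}:Finset ℕ) →
      ∃ z : EuclideanSpace ℝ (Fin d), z ∈ V a ∩ V b := by
    intro σ hsub hmem a b ha hb ha5 hb5
    obtain ⟨p, hp⟩ := (h σ hsub).mpr hmem
    refine ⟨e.symm p, ?_, ?_⟩
    · show e (e.symm p) ∈ U a
      rw [ContinuousLinearEquiv.apply_symm_apply]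
      exact (hp a ha5).mp ha
    · show e (e.symm p) ∈ U b
      rw [ContinuousLinearEquiv.apply_symm_apply]
      exact (hp b hb5).mp hb
  have m123 : ({1,2,3}:Finset ℕ) ∈ wheelCode := Set.mem_insert _ _
  have m234 : ({2,3,4}:Finset ℕ) ∈ wheelCode := by right; exact Set.mem_insert _ _
  have m345 : ({3,4,5}:Finset ℕ) ∈ wheelCode := by right; right; exact Set.mem_insert _ _
  have m145 : ({1,4,5}:Finset ℕ) ∈ wheelCode := by right; right; right; exact Set.mem_insert _ _
  have m125 : ({1,2,5}:Finset ℕ) ∈ wheelCode := by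
    right; right; right; right; exact Set.mem_insert _ _
  obtain ⟨p1, hp1⟩ := getpt {1,2,3} (by decide) m123 1 3 (by decide) (by decide) (by decide) (by decide)
  obtain ⟨p2, hp2⟩ := getpt {2,3,4} (by decide) m234 2 4 (by decide) (by decide) (by decide) (by decide)
  obtain ⟨p3, hp3⟩ := getpt {3,4,5} (by decide) m345 3 5 (by decide) (by decide) (by decide) (by decide)
  obtain ⟨p4, hp4⟩ := getpt {1,4,5} (by decide) m145 4 1 (by decide) (by decide) (by decide) (by decide)
  obtain ⟨p5, hp5⟩ := getpt {1,2,5} (by decide) m125 5 2 (by decide) (by decide) (by decide) (by decide)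
  set D : Fin 5 → Set (EuclideanSpace ℝ (Fin d)) :=
    ![V 1 ∩ V 3, V 2 ∩ V 4, V 3 ∩ V 5, V 4 ∩ V 1, V 5 ∩ V 2] with hD
  apply no_cycle D
  · intro i; fin_cases i
    · exact (hVcl 1 (by decide)).inter (hVcl 3 (by decide))
    · exact (hVcl 2 (by decide)).inter (hVcl 4 (by decide))
    · exact (hVcl 3 (by decide)).inter (hVcl 5 (by decide))
    · exact (hVcl 4 (by decide)).inter (hVcl 1 (by decide))
    · exact (hVcl 5 (by decide)).inter (hVcl 2 (by decide))
  · intro i; fin_cases i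
    · exact (hVcv 1 (by decide)).inter (hVcv 3 (by decide))
    · exact (hVcv 2 (by decide)).inter (hVcv 4 (by decide))
    · exact (hVcv 3 (by decide)).inter (hVcv 5 (by decide))
    · exact (hVcv 4 (by decide)).inter (hVcv 1 (by decide))
    · exact (hVcv 5 (by decide)).inter (hVcv 2 (by decide))
  · intro i; fin_cases i
    · exact ⟨p1, hp1⟩
    · exact ⟨p2, hp2⟩
    · exact ⟨p3, hp3⟩
    · exact ⟨p4, hp4⟩
    · exact ⟨p5, hp5⟩
  · intro i; fin_cases i
    · show Disjoint (V 1 ∩ V 3) (V 2 ∩ V 4)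
      rw [Set.disjoint_left]; rintro z ⟨z1, z3⟩ ⟨z2, z4⟩
      exact (((facts U h (e z)).1 ⟨z1, z3⟩).2.1) z4
    · show Disjoint (V 2 ∩ V 4) (V 3 ∩ V 5)
      rw [Set.disjoint_left]; rintro z ⟨z2, z4⟩ ⟨z3, z5⟩
      exact (((facts U h (e z)).2.1 ⟨z2, z4⟩).2.1) z5
    · show Disjoint (V 3 ∩ V 5) (V 4 ∩ V 1)
      rw [Set.disjoint_left]; rintro z ⟨z3, z5⟩ ⟨z4, z1⟩
      exact (((facts U h (e z)).2.2.1 ⟨z3, z5⟩).2.1) z1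
    · show Disjoint (V 4 ∩ V 1) (V 5 ∩ V 2)
      rw [Set.disjoint_left]; rintro z ⟨z4, z1⟩ ⟨z5, z2⟩
      exact (((facts U h (e z)).2.2.2.1 ⟨z4, z1⟩).2.1) z2
    · show Disjoint (V 5 ∩ V 2) (V 1 ∩ V 3)
      rw [Set.disjoint_left]; rintro z ⟨z5, z2⟩ ⟨z1, z3⟩
      exact (((facts U h (e z)).2.2.2.2.1 ⟨z5, z2⟩).2.1) z3
  · intro i; fin_cases i
    · show Disjoint (V 1 ∩ V 3) (V 3 ∩ V 5)
      rw [Set.disjoint_left]; rintro z ⟨z1, z3⟩ ⟨_, z5⟩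
      exact (((facts U h (e z)).1 ⟨z1, z3⟩).2.2) z5
    · show Disjoint (V 2 ∩ V 4) (V 4 ∩ V 1)
      rw [Set.disjoint_left]; rintro z ⟨z2, z4⟩ ⟨_, z1⟩
      exact (((facts U h (e z)).2.1 ⟨z2, z4⟩).2.2) z1
    · show Disjoint (V 3 ∩ V 5) (V 5 ∩ V 2)
      rw [Set.disjoint_left]; rintro z ⟨z3, z5⟩ ⟨_, z2⟩
      exact (((facts U h (e z)).2.2.1 ⟨z3, z5⟩).2.2) z2
    · show Disjoint (V 4 ∩ V 1) (V 1 ∩ V 3)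
      rw [Set.disjoint_left]; rintro z ⟨z4, z1⟩ ⟨_, z3⟩
      exact (((facts U h (e z)).2.2.2.1 ⟨z4, z1⟩).2.2) z3
    · show Disjoint (V 5 ∩ V 2) (V 2 ∩ V 4)
      rw [Set.disjoint_left]; rintro z ⟨z5, z2⟩ ⟨_, z4⟩
      exact (((facts U h (e z)).2.2.2.2.1 ⟨z5, z2⟩).2.2) z4
  · intro i; fin_cases i
    · show ∀ p ∈ V 1 ∩ V 3, ∀ q ∈ V 3 ∩ V 5, ((V 2 ∩ V 4) ∩ segment ℝ p q).Nonempty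
      rintro p ⟨hpa, hpb⟩ q ⟨hqa, hqb⟩
      have hseg : segment ℝ p q ⊆ V 3 := (hVcv 3 (by decide)).segment_subset hpb hqa
      obtain ⟨z, hzs, hz2, hz4⟩ := isPreconnected_closed_iff.mp
        (convex_segment p q).isPreconnected (V 2) (V 4)
        (hVcl 2 (by decide)) (hVcl 4 (by decide))
        (fun z hz => (facts U h (e z)).2.2.2.2.2.2.2.1 (hseg hz))
        ⟨p, left_mem_segment ℝ p q, ((facts U h (e p)).1 ⟨hpa, hpb⟩).1⟩
        ⟨q, right_mem_segment ℝ p q, ((facts U h (e q)).2.2.1 ⟨hqa, hqb⟩).1⟩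
      exact ⟨z, ⟨hz2, hz4⟩, hzs⟩
    · show ∀ p ∈ V 2 ∩ V 4, ∀ q ∈ V 4 ∩ V 1, ((V 3 ∩ V 5) ∩ segment ℝ p q).Nonempty
      rintro p ⟨hpa, hpb⟩ q ⟨hqa, hqb⟩
      have hseg : segment ℝ p q ⊆ V 4 := (hVcv 4 (by decide)).segment_subset hpb hqa
      obtain ⟨z, hzs, hz2, hz4⟩ := isPreconnected_closed_iff.mp
        (convex_segment p q).isPreconnected (V 3) (V 5)
        (hVcl 3 (by decide)) (hVcl 5 (by decide))
        (fun z hz => (facts U h (e z)).2.2.2.2.2.2.2.2.1 (hseg hz))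
        ⟨p, left_mem_segment ℝ p q, ((facts U h (e p)).2.1 ⟨hpa, hpb⟩).1⟩
        ⟨q, right_mem_segment ℝ p q, ((facts U h (e q)).2.2.2.1 ⟨hqa, hqb⟩).1⟩
      exact ⟨z, ⟨hz2, hz4⟩, hzs⟩
    · show ∀ p ∈ V 3 ∩ V 5, ∀ q ∈ V 5 ∩ V 2, ((V 4 ∩ V 1) ∩ segment ℝ p q).Nonempty
      rintro p ⟨hpa, hpb⟩ q ⟨hqa, hqb⟩
      have hseg : segment ℝ p q ⊆ V 5 := (hVcv 5 (by decide)).segment_subset hpb hqa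
      obtain ⟨z, hzs, hz2, hz4⟩ := isPreconnected_closed_iff.mp
        (convex_segment p q).isPreconnected (V 4) (V 1)
        (hVcl 4 (by decide)) (hVcl 1 (by decide))
        (fun z hz => (facts U h (e z)).2.2.2.2.2.2.2.2.2 (hseg hz))
        ⟨p, left_mem_segment ℝ p q, ((facts U h (e p)).2.2.1 ⟨hpa, hpb⟩).1⟩
        ⟨q, right_mem_segment ℝ p q, ((facts U h (e q)).2.2.2.2.1 ⟨hqa, hqb⟩).1⟩
      exact ⟨z, ⟨hz2, hz4⟩, hzs⟩
    · show ∀ p ∈ V 4 ∩ V 1, ∀ q ∈ V 1 ∩ V 3, ((V 5 ∩ V 2) ∩ segment ℝ p q).Nonempty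
      rintro p ⟨hpa, hpb⟩ q ⟨hqa, hqb⟩
      have hseg : segment ℝ p q ⊆ V 1 := (hVcv 1 (by decide)).segment_subset hpb hqa
      obtain ⟨z, hzs, hz2, hz4⟩ := isPreconnected_closed_iff.mp
        (convex_segment p q).isPreconnected (V 5) (V 2)
        (hVcl 5 (by decide)) (hVcl 2 (by decide))
        (fun z hz => (facts U h (e z)).2.2.2.2.2.1 (hseg hz))
        ⟨p, left_mem_segment ℝ p q, ((facts U h (e p)).2.2.2.1 ⟨hpa, hpb⟩).1⟩
        ⟨q, right_mem_segment ℝ p q, ((facts U h (e q)).1 ⟨hqa, hqb⟩).1⟩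
      exact ⟨z, ⟨hz2, hz4⟩, hzs⟩
    · show ∀ p ∈ V 5 ∩ V 2, ∀ q ∈ V 2 ∩ V 4, ((V 1 ∩ V 3) ∩ segment ℝ p q).Nonempty
      rintro p ⟨hpa, hpb⟩ q ⟨hqa, hqb⟩
      have hseg : segment ℝ p q ⊆ V 2 := (hVcv 2 (by decide)).segment_subset hpb hqa
      obtain ⟨z, hzs, hz2, hz4⟩ := isPreconnected_closed_iff.mp
        (convex_segment p q).isPreconnected (V 1) (V 3)
        (hVcl 1 (by decide)) (hVcl 3 (by decide))
        (fun z hz => (facts U h (e z)).2.2.2.2.2.2.1 (hseg hz))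
        ⟨p, left_mem_segment ℝ p q, ((facts U h (e p)).2.2.2.2.1 ⟨hpa, hpb⟩).1⟩
        ⟨q, right_mem_segment ℝ p q, ((facts U h (e q)).2.1 ⟨hqa, hqb⟩).1⟩
      exact ⟨z, ⟨hz2, hz4⟩, hzs⟩
end

section
/- For every d ≥ 1, the prism code P_d has an open convex realization in ℝ^d; combined with the fact that the nerve of the sets for neurons 1,...,d+1 is the boundary of a d-simplex (which cannot be realized by open convex sets in ℝ^{d-1}), the open embedding dimension of P_d is exactly d. -/
/-- Neurons of the prism code: `1,...,d+1` (left) and `1̄,...,(d+2)‾` (right). -/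
abbrev PrismNeuron (d : ℕ) := Fin (d + 1) ⊕ Fin (d + 2)

/-- The prism code `P_d`. -/
def prismCode (d : ℕ) : Set (Finset (PrismNeuron d)) :=
  {σ | ∃ i : Fin (d + 1),
      σ ⊆ insert (Sum.inr i.castSucc)
        (((Finset.univ : Finset (Fin (d + 1))).erase i).image Sum.inl)} ∪
  {(Finset.univ : Finset (Fin (d + 2))).image Sum.inr}

/-- `U` is an open convex realization of the code `C` in `ℝ^e`. -/
def IsOpenConvexRealization {ι : Type*} (e : ℕ) (U : ι → Set (Fin e → ℝ))
    (C : Set (Finset ι)) : Prop :=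
  (∀ x, IsOpen (U x) ∧ Convex ℝ (U x)) ∧ ∀ σ, (atom U σ).Nonempty ↔ σ ∈ C

open Finset



noncomputable section PrismAux

/-- Affine coordinates: `d+1` affine functions on `ℝ^d` summing to `1`. -/
def yc (d : ℕ) (x : Fin d → ℝ) (j : Fin (d + 1)) : ℝ :=
  if h : (j : ℕ) < d then x ⟨j, h⟩ else 1 - ∑ k, x k

lemma yc_castSucc {d : ℕ} (x : Fin d → ℝ) (k : Fin d) : yc d x k.castSucc = x k := by
  simp [yc, k.isLt]

lemma yc_last {d : ℕ} (x : Fin d → ℝ) : yc d x (Fin.last d) = 1 - ∑ k, x k := by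
  simp [yc]

lemma sum_yc (d : ℕ) (x : Fin d → ℝ) : ∑ j, yc d x j = 1 := by
  rw [Fin.sum_univ_castSucc]
  simp [yc_castSucc, yc_last]

lemma exists_yc (d : ℕ) (t : Fin (d + 1) → ℝ) (ht : ∑ j, t j = 1) :
    ∃ x : Fin d → ℝ, ∀ j, yc d x j = t j := by
  refine ⟨fun k => t k.castSucc, fun j => ?_⟩
  induction j using Fin.lastCases with
  | last =>
      rw [yc_last]
      rw [Fin.sum_univ_castSucc] at ht
      linarith
  | cast k => rw [yc_castSucc]

lemma yc_rep (d : ℕ) (j : Fin (d + 1)) :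
    ∃ (f : (Fin d → ℝ) → ℝ) (c : ℝ), IsLinearMap ℝ f ∧ Continuous f ∧
      ∀ x, yc d x j = f x + c := by
  by_cases h : (j : ℕ) < d
  · refine ⟨fun x => x ⟨j, h⟩, 0, ⟨fun a b => rfl, fun c a => rfl⟩, continuous_apply _,
      fun x => by simp [yc, h]⟩
  · refine ⟨fun x => -∑ k, x k, 1, ⟨fun a b => ?_, fun c a => ?_⟩,
      (continuous_finset_sum _ fun i _ => continuous_apply i).neg, fun x => by simp [yc, h]; ring⟩
    · simp [Finset.sum_add_distrib]; ring
    · simp [Finset.mul_sum]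

lemma oc_lt (d : ℕ) (j : Fin (d + 1)) (c : ℝ) :
    IsOpen {x | yc d x j < c} ∧ Convex ℝ {x | yc d x j < c} := by
  obtain ⟨f, c₀, hlin, hcont, hrep⟩ := yc_rep d j
  have hset : {x | yc d x j < c} = {x | f x < c - c₀} := by
    ext x; simp only [Set.mem_setOf_eq, hrep x]; constructor <;> intro <;> linarith
  rw [hset]
  exact ⟨isOpen_lt hcont continuous_const, convex_halfSpace_lt hlin _⟩

lemma oc_gt (d : ℕ) (j : Fin (d + 1)) (c : ℝ) :
    IsOpen {x | c < yc d x j} ∧ Convex ℝ {x | c < yc d x j} := by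
  obtain ⟨f, c₀, hlin, hcont, hrep⟩ := yc_rep d j
  have hset : {x | c < yc d x j} = {x | c - c₀ < f x} := by
    ext x; simp only [Set.mem_setOf_eq, hrep x]; constructor <;> intro <;> linarith
  rw [hset]
  exact ⟨isOpen_lt continuous_const hcont, convex_halfSpace_gt hlin _⟩

end PrismAux
noncomputable section P2

def pL (d : ℕ) : ℝ := 1 / (2 * ((d : ℝ) + 1))
def pB (d : ℕ) : ℝ := (1 - pL d) / (d : ℝ)
def pT (d : ℕ) : ℝ := (d : ℝ) + 2
def pM (d : ℕ) : ℝ := (d : ℝ) + 3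

lemma pL_pos (d : ℕ) : 0 < pL d := by unfold pL; positivity

lemma pL_mul (d : ℕ) : pL d * ((d : ℝ) + 1) = 1 / 2 := by
  unfold pL; field_simp

lemma pB_mul (d : ℕ) (hd : 1 ≤ d) : (d : ℝ) * pB d = 1 - pL d := by
  have hD : ((d : ℝ)) ≠ 0 := by
    have : (1 : ℝ) ≤ (d : ℝ) := by exact_mod_cast hd
    linarith
  unfold pB; field_simp

lemma pL_lt_pB (d : ℕ) (hd : 1 ≤ d) : pL d < pB d := by
  have hD : (1 : ℝ) ≤ (d : ℝ) := by exact_mod_cast hd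
  nlinarith [pB_mul d hd, pL_mul d, pL_pos d]

lemma pB_pos (d : ℕ) (hd : 1 ≤ d) : 0 < pB d := (pL_pos d).trans (pL_lt_pB d hd)

lemma pB_lt_one (d : ℕ) (hd : 1 ≤ d) : pB d < 1 := by
  have hD : (1 : ℝ) ≤ (d : ℝ) := by exact_mod_cast hd
  nlinarith [pB_mul d hd, pL_pos d, pB_pos d hd]

lemma pL_lt_inv (d : ℕ) : pL d < 1 / ((d : ℝ) + 1) := by
  have h : (0 : ℝ) < (d : ℝ) + 1 := by positivity
  rw [lt_div_iff₀ h]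
  linarith [pL_mul d]

lemma inv_lt_pB (d : ℕ) (hd : 1 ≤ d) : 1 / ((d : ℝ) + 1) < pB d := by
  have h : (0 : ℝ) < (d : ℝ) + 1 := by positivity
  rw [div_lt_iff₀ h]
  nlinarith [pB_mul d hd, pL_lt_pB d hd]

lemma pB_lt_pT (d : ℕ) (hd : 1 ≤ d) : pB d < pT d := by
  have hD : (0 : ℝ) ≤ (d : ℝ) := by positivity
  have := pB_lt_one d hd
  unfold pT; linarith

end P2

noncomputable section P3

/-- Left set `V_j`. -/
def lSet (d : ℕ) (j : Fin (d + 1)) : Set (Fin d → ℝ) :=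
  {x | yc d x j < 0} ∩ ⋂ k ∈ univ.erase j, {x | yc d x k < pM d}

/-- Right set `W_i`, `i ≤ d`. -/
def wSet (d : ℕ) (i : Fin (d + 1)) : Set (Fin d → ℝ) :=
  ({x | pL d < yc d x i} ∩ {x | yc d x i < pT d}) ∩
    ⋂ k ∈ univ.erase i, {x | yc d x k < pB d}

/-- The core, i.e. the last right set. -/
def kSet (d : ℕ) : Set (Fin d → ℝ) :=
  ⋂ k, ({x | pL d < yc d x k} ∩ {x | yc d x k < pB d})

lemma mem_lSet {d : ℕ} {x : Fin d → ℝ} {j : Fin (d + 1)} :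
    x ∈ lSet d j ↔ yc d x j < 0 ∧ ∀ k, k ≠ j → yc d x k < pM d := by
  simp [lSet, Set.mem_iInter]

lemma mem_wSet {d : ℕ} {x : Fin d → ℝ} {i : Fin (d + 1)} :
    x ∈ wSet d i ↔ (pL d < yc d x i ∧ yc d x i < pT d) ∧ ∀ k, k ≠ i → yc d x k < pB d := by
  simp [wSet, Set.mem_iInter]

lemma mem_kSet {d : ℕ} {x : Fin d → ℝ} :
    x ∈ kSet d ↔ ∀ k, pL d < yc d x k ∧ yc d x k < pB d := by
  simp [kSet, Set.mem_iInter]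

lemma lSet_oc (d : ℕ) (j : Fin (d + 1)) : IsOpen (lSet d j) ∧ Convex ℝ (lSet d j) :=
  ⟨((oc_lt d j 0).1).inter (isOpen_biInter_finset fun k _ => (oc_lt d k (pM d)).1),
    ((oc_lt d j 0).2).inter (convex_iInter₂ fun k _ => (oc_lt d k (pM d)).2)⟩

lemma wSet_oc (d : ℕ) (i : Fin (d + 1)) : IsOpen (wSet d i) ∧ Convex ℝ (wSet d i) :=
  ⟨(((oc_gt d i (pL d)).1).inter ((oc_lt d i (pT d)).1)).inter
      (isOpen_biInter_finset fun k _ => (oc_lt d k (pB d)).1),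
    (((oc_gt d i (pL d)).2).inter ((oc_lt d i (pT d)).2)).inter
      (convex_iInter₂ fun k _ => (oc_lt d k (pB d)).2)⟩

lemma kSet_oc (d : ℕ) : IsOpen (kSet d) ∧ Convex ℝ (kSet d) :=
  ⟨isOpen_iInter_of_finite fun k => ((oc_gt d k (pL d)).1).inter ((oc_lt d k (pB d)).1),
    convex_iInter fun k => ((oc_gt d k (pL d)).2).inter ((oc_lt d k (pB d)).2)⟩

end P3

noncomputable section P4

def prismU (d : ℕ) : PrismNeuron d → Set (Fin d → ℝ)
  | Sum.inl j => lSet d j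
  | Sum.inr r => if h : (r : ℕ) < d + 1 then wSet d ⟨r, h⟩ else kSet d

lemma prismU_inl (d : ℕ) (j : Fin (d + 1)) : prismU d (Sum.inl j) = lSet d j := rfl

lemma prismU_inr_castSucc (d : ℕ) (i : Fin (d + 1)) :
    prismU d (Sum.inr i.castSucc) = wSet d i := by
  have h : ((i.castSucc : Fin (d + 2)) : ℕ) < d + 1 := by simp [i.isLt]
  show (if h : ((i.castSucc : Fin (d + 2)) : ℕ) < d + 1 then wSet d ⟨_, h⟩ else kSet d) = _
  rw [dif_pos h]
  congr 1

lemma prismU_inr_last (d : ℕ) :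
    prismU d (Sum.inr (Fin.last (d + 1))) = kSet d := by
  show (if h : ((Fin.last (d + 1) : Fin (d + 2)) : ℕ) < d + 1 then wSet d ⟨_, h⟩ else kSet d) = _
  rw [dif_neg (by simp)]

/-- The core is contained in each `W_i`. -/
lemma kSet_subset_wSet (d : ℕ) (hd : 1 ≤ d) (i : Fin (d + 1)) : kSet d ⊆ wSet d i := by
  intro x hx
  rw [mem_kSet] at hx
  rw [mem_wSet]
  exact ⟨⟨(hx i).1, (hx i).2.trans (pB_lt_pT d hd)⟩, fun k _ => (hx k).2⟩

/-- If `x` lies in two distinct `W`'s then it lies in the core. -/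
lemma wSet_pair (d : ℕ) (hd : 1 ≤ d) {x : Fin d → ℝ} {i k : Fin (d + 1)} (hik : i ≠ k)
    (hi : x ∈ wSet d i) (hk : x ∈ wSet d k) : x ∈ kSet d := by
  rw [mem_wSet] at hi hk
  rw [mem_kSet]
  have hub : ∀ m, yc d x m < pB d := by
    intro m
    by_cases hmi : m = i
    · subst hmi; exact hk.2 m (by rintro rfl; exact hik rfl)
    · exact hi.2 m hmi
  intro m
  refine ⟨?_, hub m⟩
  have hcard : (univ.erase m).card = d := by
    rw [Finset.card_erase_of_mem (mem_univ m), Finset.card_univ, Fintype.card_fin]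
    simp
  have hne : (univ.erase m).Nonempty := by
    rw [← Finset.card_pos, hcard]; omega
  have hsub : ∑ k ∈ univ.erase m, yc d x k < (d : ℝ) * pB d := by
    calc ∑ k ∈ univ.erase m, yc d x k < ∑ _k ∈ univ.erase m, pB d :=
          Finset.sum_lt_sum_of_nonempty hne fun k _ => hub k
      _ = (d : ℝ) * pB d := by rw [Finset.sum_const, hcard, nsmul_eq_mul]
  have hsum : yc d x m + ∑ k ∈ univ.erase m, yc d x k = 1 := by
    rw [Finset.add_sum_erase _ _ (mem_univ m)]
    exact sum_yc d x
  have := pB_mul d hd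
  linarith [pL_pos d]

/-- A uniform construction of target coordinate vectors. -/
def tfun {d : ℕ} (i : Fin (d + 1)) (A : Finset (Fin (d + 1))) (a b : ℝ) : Fin (d + 1) → ℝ :=
  fun j => if j = i then a else if j ∈ A then b else 0

lemma sum_tfun {d : ℕ} (i : Fin (d + 1)) (A : Finset (Fin (d + 1))) (a b : ℝ)
    (hA : ∀ j ∈ A, j ≠ i) : ∑ j, tfun i A a b j = a + (A.card : ℝ) * b := by
  classical
  rw [← Finset.add_sum_erase _ _ (mem_univ i)]
  have h1 : tfun i A a b i = a := if_pos rfl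
  have h2 : ∑ j ∈ univ.erase i, tfun i A a b j = ∑ j ∈ univ.erase i, (if j ∈ A then b else 0) :=
    Finset.sum_congr rfl fun j hj => if_neg (Finset.mem_erase.mp hj).1
  have h3 : (univ.erase i).filter (· ∈ A) = A := by
    ext j
    simp only [Finset.mem_filter, Finset.mem_erase, Finset.mem_univ, and_true, true_and]
    exact ⟨fun h => h.2, fun h => ⟨hA j h, h⟩⟩
  rw [h1, h2, ← Finset.sum_filter, h3, Finset.sum_const, nsmul_eq_mul]

end P4

noncomputable section P5

lemma dir1 (d : ℕ) (hd : 1 ≤ d) (σ : Finset (PrismNeuron d)) (x : Fin d → ℝ)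
    (hx : ∀ n, n ∈ σ ↔ x ∈ prismU d n) : σ ∈ prismCode d := by
  have hL0 := pL_pos d
  rw [prismCode]
  rw [Set.mem_union, Set.mem_setOf_eq, Set.mem_singleton_iff]
  by_cases hK : x ∈ kSet d
  · right
    ext n
    rw [hx n]
    cases n with
    | inl j =>
        simp only [Finset.mem_image, Finset.mem_univ, true_and]
        constructor
        · intro hmem
          rw [prismU_inl, mem_lSet] at hmem
          exact absurd hmem.1 (by push_neg; linarith [(mem_kSet.mp hK j).1, hL0])
        · rintro ⟨r, hr⟩; exact absurd hr (by simp)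
    | inr r =>
        simp only [Finset.mem_image, Finset.mem_univ, true_and]
        constructor
        · intro _; exact ⟨r, rfl⟩
        · intro _
          induction r using Fin.lastCases with
          | last => rw [prismU_inr_last]; exact hK
          | cast i => rw [prismU_inr_castSucc]; exact kSet_subset_wSet d hd i hK
  · left
    by_cases hQ : ∃ i, x ∈ wSet d i
    · obtain ⟨i, hi⟩ := hQ
      refine ⟨i, fun n hn => ?_⟩
      have hmem := (hx n).mp hn
      cases n with
      | inl j =>
          rw [prismU_inl, mem_lSet] at hmem
          have hji : j ≠ i := by
            rintro rfl
            have := (mem_wSet.mp hi).1.1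
            linarith [hmem.1, hL0]
          exact Finset.mem_insert_of_mem
            (Finset.mem_image.mpr ⟨j, Finset.mem_erase.mpr ⟨hji, mem_univ j⟩, rfl⟩)
      | inr r =>
          induction r using Fin.lastCases with
          | last => rw [prismU_inr_last] at hmem; exact absurd hmem hK
          | cast k =>
              rw [prismU_inr_castSucc] at hmem
              have hki : k = i := by
                by_contra hki
                exact hK (wSet_pair d hd hki hmem hi)
              subst hki
              exact Finset.mem_insert_self _ _
    · have hpos : ∃ m, 0 ≤ yc d x m := by
        by_contra hneg
        push_neg at hneg
        have : ∑ j, yc d x j < ∑ _j : Fin (d + 1), (0 : ℝ) :=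
          Finset.sum_lt_sum_of_nonempty Finset.univ_nonempty fun j _ => hneg j
        rw [sum_yc] at this
        simp at this
        linarith
      obtain ⟨m, hm⟩ := hpos
      refine ⟨m, fun n hn => ?_⟩
      have hmem := (hx n).mp hn
      cases n with
      | inl j =>
          rw [prismU_inl, mem_lSet] at hmem
          have hjm : j ≠ m := by rintro rfl; linarith [hmem.1]
          exact Finset.mem_insert_of_mem
            (Finset.mem_image.mpr ⟨j, Finset.mem_erase.mpr ⟨hjm, mem_univ j⟩, rfl⟩)
      | inr r =>
          induction r using Fin.lastCases with
          | last => rw [prismU_inr_last] at hmem; exact absurd hmem hK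
          | cast k =>
              rw [prismU_inr_castSucc] at hmem
              exact absurd ⟨k, hmem⟩ hQ

end P5

noncomputable section P6

lemma dir2 (d : ℕ) (hd : 1 ≤ d) (σ : Finset (PrismNeuron d)) (hσ : σ ∈ prismCode d) :
    ∃ x : Fin d → ℝ, ∀ n, n ∈ σ ↔ x ∈ prismU d n := by
  classical
  have hD1 : (1 : ℝ) ≤ (d : ℝ) := by exact_mod_cast hd
  have hL0 := pL_pos d
  have hLB := pL_lt_pB d hd
  have hB0 := pB_pos d hd
  have hB1 := pB_lt_one d hd
  rcases hσ with hσ | hσ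
  swap
  · -- σ is the full right codeword: realize at the barycenter
    rw [Set.mem_singleton_iff] at hσ
    subst hσ
    have ht : ∑ _j : Fin (d + 1), (1 / ((d : ℝ) + 1)) = 1 := by
      rw [Finset.sum_const, Finset.card_univ, Fintype.card_fin, nsmul_eq_mul]
      have : ((d : ℝ) + 1) ≠ 0 := by positivity
      push_cast
      field_simp
    obtain ⟨x, hyx⟩ := exists_yc d _ ht
    have hxK : x ∈ kSet d := mem_kSet.mpr fun k => by
      rw [hyx k]; exact ⟨pL_lt_inv d, inv_lt_pB d hd⟩
    refine ⟨x, fun n => ?_⟩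
    cases n with
    | inl j =>
        apply iff_of_false
        · intro h
          obtain ⟨r, -, hr⟩ := Finset.mem_image.mp h
          exact absurd hr (by simp)
        · rw [prismU_inl, mem_lSet]
          rintro ⟨h1, -⟩
          rw [hyx j] at h1
          have : (0:ℝ) < 1 / ((d : ℝ) + 1) := by positivity
          linarith
    | inr r =>
        apply iff_of_true
        · exact Finset.mem_image.mpr ⟨r, mem_univ r, rfl⟩
        · induction r using Fin.lastCases with
          | last => rw [prismU_inr_last]; exact hxK
          | cast i => rw [prismU_inr_castSucc]; exact kSet_subset_wSet d hd i hxK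
  -- σ ⊆ S_i
  obtain ⟨i, hsub⟩ := hσ
  set A := univ.filter (fun j => Sum.inl j ∈ σ) with hAdef
  have hAσ : ∀ j, j ∈ A ↔ Sum.inl j ∈ σ := by intro j; simp [hAdef]
  have hil : ∀ j, Sum.inl j ∈ σ → j ≠ i := by
    intro j hj heq
    subst heq
    rcases Finset.mem_insert.mp (hsub hj) with h | h
    · exact absurd h (by simp)
    · obtain ⟨j', hj', hEq⟩ := Finset.mem_image.mp h
      exact (Finset.mem_erase.mp hj').1 (Sum.inl.inj hEq)
  have hir : ∀ r, Sum.inr r ∈ σ → r = i.castSucc := by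
    intro r hr
    rcases Finset.mem_insert.mp (hsub hr) with h | h
    · exact Sum.inr.inj h
    · obtain ⟨j', -, hEq⟩ := Finset.mem_image.mp h
      exact absurd hEq (by simp)
  have hAi : ∀ j ∈ A, j ≠ i := fun j hj => hil j ((hAσ j).mp hj)
  have hAcard : (A.card : ℝ) ≤ (d : ℝ) := by
    have hsubA : A ⊆ univ.erase i := fun j hj => Finset.mem_erase.mpr ⟨hAi j hj, mem_univ j⟩
    have h1 := Finset.card_le_card hsubA
    rw [Finset.card_erase_of_mem (mem_univ i), Finset.card_univ, Fintype.card_fin,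
      Nat.add_sub_cancel] at h1
    exact_mod_cast h1
  have hA0 : (0 : ℝ) ≤ (A.card : ℝ) := by positivity
  by_cases hri : Sum.inr i.castSucc ∈ σ
  · -- case (a): σ contains the right neuron i
    obtain ⟨x, hyx⟩ := exists_yc d (tfun i A (1 + A.card) (-1))
      (by rw [sum_tfun i A _ _ hAi]; ring)
    have hyi : yc d x i = 1 + (A.card : ℝ) := by rw [hyx]; exact if_pos rfl
    have hymem : ∀ j ∈ A, yc d x j = -1 := fun j hj => by
      rw [hyx]; unfold tfun; rw [if_neg (hAi j hj), if_pos hj]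
    have hyother : ∀ j, j ≠ i → j ∉ A → yc d x j = 0 := fun j hj hjA => by
      rw [hyx]; unfold tfun; rw [if_neg hj, if_neg hjA]
    have hyub : ∀ j, yc d x j ≤ 1 + (A.card : ℝ) := by
      intro j
      by_cases hj : j = i
      · subst hj; rw [hyi]
      · by_cases hjA : j ∈ A
        · rw [hymem j hjA]; linarith
        · rw [hyother j hj hjA]; linarith
    have haT : 1 + (A.card : ℝ) < pT d := by unfold pT; linarith
    have haM : 1 + (A.card : ℝ) < pM d := by unfold pM; linarith
    refine ⟨x, fun n => ?_⟩
    cases n with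
    | inl j =>
        rw [prismU_inl, mem_lSet]
        constructor
        · intro hj
          have hjA : j ∈ A := (hAσ j).mpr hj
          exact ⟨by rw [hymem j hjA]; norm_num, fun k _ => lt_of_le_of_lt (hyub k) haM⟩
        · rintro ⟨h1, -⟩
          by_contra hns
          have hjA : j ∉ A := fun h => hns ((hAσ j).mp h)
          by_cases hji : j = i
          · subst hji; rw [hyi] at h1; linarith
          · rw [hyother j hji hjA] at h1; linarith
    | inr r =>
        induction r using Fin.lastCases with
        | last =>
            apply iff_of_false
            · intro h
              exact (Fin.castSucc_lt_last i).ne ((hir _ h).symm)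
            · rw [prismU_inr_last, mem_kSet]
              intro h
              have := (h i).2
              rw [hyi] at this
              linarith
        | cast k =>
            by_cases hki : k = i
            · subst hki
              apply iff_of_true hri
              rw [prismU_inr_castSucc, mem_wSet]
              refine ⟨⟨by rw [hyi]; linarith, by rw [hyi]; exact haT⟩, fun m hm => ?_⟩
              by_cases hmA : m ∈ A
              · rw [hymem m hmA]; linarith
              · rw [hyother m hm hmA]; exact hB0
            · apply iff_of_false
              · intro h
                exact hki (Fin.castSucc_injective _ (hir _ h))
              · rw [prismU_inr_castSucc, mem_wSet]
                rintro ⟨-, h2⟩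
                have := h2 i (fun h => hki h.symm)
                rw [hyi] at this
                linarith
  · -- case (b): σ contains no right neuron
    have hirσ : ∀ r, Sum.inr r ∉ σ := by
      intro r hr
      have := hir r hr
      subst this
      exact hri hr
    by_cases hA : A.Nonempty
    · -- (b1): some left neuron present
      have hAc0 : (0 : ℝ) < (A.card : ℝ) := by exact_mod_cast Finset.card_pos.mpr hA
      set b : ℝ := -(((d : ℝ) + 1) / (A.card : ℝ)) with hbdef
      have hb0 : b < 0 := by
        have : (0:ℝ) < ((d : ℝ) + 1) / (A.card : ℝ) := by positivity
        rw [hbdef]; linarith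
      have hAb : (A.card : ℝ) * b = -((d : ℝ) + 1) := by
        rw [hbdef]; field_simp
      obtain ⟨x, hyx⟩ := exists_yc d (tfun i A (pT d) b)
        (by rw [sum_tfun i A _ _ hAi, hAb]; unfold pT; ring)
      have hyi : yc d x i = pT d := by rw [hyx]; exact if_pos rfl
      have hymem : ∀ j ∈ A, yc d x j = b := fun j hj => by
        rw [hyx]; unfold tfun; rw [if_neg (hAi j hj), if_pos hj]
      have hyother : ∀ j, j ≠ i → j ∉ A → yc d x j = 0 := fun j hj hjA => by
        rw [hyx]; unfold tfun; rw [if_neg hj, if_neg hjA]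
      have hT0 : (0:ℝ) < pT d := by unfold pT; linarith
      have hTM : pT d < pM d := by unfold pT pM; linarith
      have hyub : ∀ j, yc d x j ≤ pT d := by
        intro j
        by_cases hj : j = i
        · subst hj; rw [hyi]
        · by_cases hjA : j ∈ A
          · rw [hymem j hjA]; linarith
          · rw [hyother j hj hjA]; linarith
      have hBT : pB d < pT d := pB_lt_pT d hd
      refine ⟨x, fun n => ?_⟩
      cases n with
      | inl j =>
          rw [prismU_inl, mem_lSet]
          constructor
          · intro hj
            have hjA : j ∈ A := (hAσ j).mpr hj
            exact ⟨by rw [hymem j hjA]; exact hb0,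
              fun k _ => lt_of_le_of_lt (hyub k) hTM⟩
          · rintro ⟨h1, -⟩
            by_contra hns
            have hjA : j ∉ A := fun h => hns ((hAσ j).mp h)
            by_cases hji : j = i
            · subst hji; rw [hyi] at h1; linarith
            · rw [hyother j hji hjA] at h1; linarith
      | inr r =>
          apply iff_of_false (hirσ r)
          induction r using Fin.lastCases with
          | last =>
              rw [prismU_inr_last, mem_kSet]
              intro h
              have := (h i).2
              rw [hyi] at this
              linarith
          | cast k =>
              rw [prismU_inr_castSucc, mem_wSet]
              by_cases hki : k = i
              · subst hki
                rintro ⟨⟨-, h2⟩, -⟩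
                rw [hyi] at h2
                exact lt_irrefl _ h2
              · rintro ⟨-, h2⟩
                have := h2 i (fun h => hki h.symm)
                rw [hyi] at this
                linarith
    · -- (b2): σ is empty
      have hAe : ∀ j, Sum.inl j ∉ σ := fun j hj => hA ⟨j, (hAσ j).mpr hj⟩
      have hσe : ∀ n, n ∉ σ := by rintro (j | r); exacts [hAe j, hirσ r]
      obtain ⟨k, hk⟩ : ∃ k : Fin (d + 1), k ≠ i := by
        by_cases h0 : i = ⟨0, by omega⟩
        · refine ⟨⟨1, by omega⟩, ?_⟩
          subst h0
          simp [Fin.ext_iff]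
        · exact ⟨⟨0, by omega⟩, fun hc => h0 hc.symm⟩
      have hki : ∀ j ∈ ({k} : Finset (Fin (d + 1))), j ≠ i := by
        intro j hj
        rw [Finset.mem_singleton] at hj
        subst hj; exact hk
      obtain ⟨x, hyx⟩ := exists_yc d (tfun i {k} (pM d + 1) (-(pM d)))
        (by rw [sum_tfun i {k} _ _ hki, Finset.card_singleton]; push_cast; ring)
      have hyi : yc d x i = pM d + 1 := by rw [hyx]; exact if_pos rfl
      have hM0 : (0:ℝ) < pM d := by unfold pM; linarith
      have hBM : pB d < pM d + 1 := by unfold pM; linarith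
      have hTM : pT d < pM d + 1 := by unfold pT pM; linarith
      refine ⟨x, fun n => ?_⟩
      apply iff_of_false (hσe n)
      cases n with
      | inl j =>
          rw [prismU_inl, mem_lSet]
          rintro ⟨h1, h2⟩
          by_cases hji : j = i
          · subst hji; rw [hyi] at h1; linarith
          · have := h2 i (fun h => hji h.symm)
            rw [hyi] at this
            linarith
      | inr r =>
          induction r using Fin.lastCases with
          | last =>
              rw [prismU_inr_last, mem_kSet]
              intro h
              have := (h i).2
              rw [hyi] at this
              linarith
          | cast k' =>
              rw [prismU_inr_castSucc, mem_wSet]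
              by_cases hki' : k' = i
              · subst hki'
                rintro ⟨⟨-, h2⟩, -⟩
                rw [hyi] at h2
                linarith
              · rintro ⟨-, h2⟩
                have := h2 i (fun h => hki' h.symm)
                rw [hyi] at this
                linarith

end P6

noncomputable section P7

lemma lower_bound (d : ℕ) (hd : 1 ≤ d) (e : ℕ) (U : PrismNeuron d → Set (Fin e → ℝ))
    (hoc : ∀ x, IsOpen (U x) ∧ Convex ℝ (U x))
    (hatom : ∀ σ, (atom U σ).Nonempty ↔ σ ∈ prismCode d) : d ≤ e := by
  classical
  by_contra h
  push_neg at h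
  set V : Fin (d + 1) → Set (Fin e → ℝ) := fun j => U (Sum.inl j) with hV
  -- every d of the V's intersect
  have h_i : ∀ i : Fin (d + 1), ∃ p, ∀ j, j ≠ i → p ∈ V j := by
    intro i
    have hcw : (insert (Sum.inr i.castSucc)
        (((Finset.univ : Finset (Fin (d + 1))).erase i).image Sum.inl)) ∈ prismCode d :=
      Or.inl ⟨i, Finset.Subset.refl _⟩
    obtain ⟨p, hp⟩ := (hatom _).mpr hcw
    refine ⟨p, fun j hj => ?_⟩
    exact (hp (Sum.inl j)).mp (Finset.mem_insert_of_mem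
      (Finset.mem_image.mpr ⟨j, Finset.mem_erase.mpr ⟨hj, mem_univ j⟩, rfl⟩))
  -- but not all of them
  have h_not : ¬ ∃ p, ∀ j, p ∈ V j := by
    rintro ⟨p, hp⟩
    set σp : Finset (PrismNeuron d) := univ.filter (fun n => p ∈ U n) with hσp
    have hpatom : p ∈ atom U σp := by
      intro n
      simp [hσp]
    have hcode : σp ∈ prismCode d := (hatom σp).mp ⟨p, hpatom⟩
    rcases hcode with ⟨i, hsub⟩ | hfull
    · have : Sum.inl i ∈ σp := by simp [hσp]; exact hp i
      rcases Finset.mem_insert.mp (hsub this) with hcon | hcon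
      · exact absurd hcon (by simp)
      · obtain ⟨j', hj', hEq⟩ := Finset.mem_image.mp hcon
        exact (Finset.mem_erase.mp hj').1 (Sum.inl.inj hEq)
    · have h0 : Sum.inl (⟨0, by omega⟩ : Fin (d + 1)) ∈ σp := by simp [hσp]; exact hp _
      rw [hfull] at h0
      obtain ⟨r, -, hr⟩ := Finset.mem_image.mp h0
      exact absurd hr (by simp)
  -- Helly
  have hrank : Module.finrank ℝ (Fin e → ℝ) = e := Module.finrank_fin_fun ℝ
  have hhelly : (⋂ i ∈ (univ : Finset (Fin (d + 1))), V i).Nonempty := by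
    apply Convex.helly_theorem' (𝕜 := ℝ) (fun i _ => (hoc (Sum.inl i)).2)
    intro I _ hIcard
    rw [hrank] at hIcard
    have hInotuniv : ∃ i : Fin (d + 1), i ∉ I := by
      by_contra hall
      push_neg at hall
      have : I = univ := Finset.eq_univ_iff_forall.mpr hall
      rw [this, Finset.card_univ, Fintype.card_fin] at hIcard
      omega
    obtain ⟨i, hi⟩ := hInotuniv
    obtain ⟨p, hp⟩ := h_i i
    exact ⟨p, Set.mem_biInter fun j hj => hp j (fun hc => hi (hc ▸ hj))⟩
  obtain ⟨p, hp⟩ := hhelly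
  rw [Set.mem_iInter₂] at hp
  exact h_not ⟨p, fun j => hp j (mem_univ j)⟩

end P7

/-- The open embedding dimension of `P_d` is exactly `d`: it has an open convex
realization in `ℝ^d`, and no open convex realization in any `ℝ^e` with `e < d`. -/
theorem stmt_13 (d : ℕ) (hd : 1 ≤ d) :
    (∃ U : PrismNeuron d → Set (Fin d → ℝ), IsOpenConvexRealization d U (prismCode d)) ∧
    (∀ e : ℕ, (∃ U : PrismNeuron d → Set (Fin e → ℝ),
        IsOpenConvexRealization e U (prismCode d)) → d ≤ e) := by
  constructor
  · refine ⟨prismU d, ?_, ?_⟩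
    · rintro (j | r)
      · exact lSet_oc d j
      · induction r using Fin.lastCases with
        | last => rw [prismU_inr_last]; exact kSet_oc d
        | cast i => rw [prismU_inr_castSucc]; exact wSet_oc d i
    · intro σ
      constructor
      · rintro ⟨x, hx⟩
        exact dir1 d hd σ x hx
      · intro hσ
        obtain ⟨x, hx⟩ := dir2 d hd σ hσ
        exact ⟨x, hx⟩
  · rintro e ⟨U, hoc, hatom⟩
    exact lower_bound d hd e U hoc hatom
end

section
/- In any realization (by sets all open or all closed) {U₁,...,Uₙ} of a code C containing codewords σ and τ with σ ⊄ τ and τ ⊄ σ, if x ∈ A_σ, y ∈ A_τ, and γ : [0,1] → ℝ^d is a continuous path from x to y whose image lies in A_σ ∪ A_τ, then we reach a contradiction: no such path exists. -/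
/-- In a realization (all sets open or all closed) of a code `C` containing
incomparable codewords `σ` and `τ`, no continuous path from a point of `A_σ` to a
point of `A_τ` can stay inside `A_σ ∪ A_τ`. -/
theorem stmt_14 {d n : ℕ} (C : Set (Finset (Fin n))) (U : Fin n → Set (Fin d → ℝ))
    (hU : (∀ i, IsOpen (U i)) ∨ (∀ i, IsClosed (U i)))
    (hreal : ∀ ρ : Finset (Fin n), (atom U ρ).Nonempty ↔ ρ ∈ C)
    (σ τ : Finset (Fin n)) (hσ : σ ∈ C) (hτ : τ ∈ C)
    (hστ : ¬ σ ⊆ τ) (hτσ : ¬ τ ⊆ σ)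
    (x y : Fin d → ℝ) (hx : x ∈ atom U σ) (hy : y ∈ atom U τ)
    (γ : ℝ → (Fin d → ℝ)) (hγ : ContinuousOn γ (Set.Icc 0 1))
    (hγ0 : γ 0 = x) (hγ1 : γ 1 = y)
    (him : γ '' Set.Icc 0 1 ⊆ atom U σ ∪ atom U τ) : False := by
  obtain ⟨i, hiσ, hiτ⟩ : ∃ i, i ∈ σ ∧ i ∉ τ := by
    by_contra h; push_neg at h; exact hστ fun a ha => h a ha
  obtain ⟨j, hjτ, hjσ⟩ : ∃ j, j ∈ τ ∧ j ∉ σ := by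
    by_contra h; push_neg at h; exact hτσ fun a ha => h a ha
  have hxi : x ∈ U i := (hx i).1 hiσ
  have hxj : x ∉ U j := fun h => hjσ ((hx j).2 h)
  have hyj : y ∈ U j := (hy j).1 hjτ
  have hyi : y ∉ U i := fun h => hiτ ((hy i).2 h)
  have hs : IsPreconnected (γ '' Set.Icc (0:ℝ) 1) :=
    isPreconnected_Icc.image γ hγ
  have h0 : γ 0 ∈ γ '' Set.Icc (0:ℝ) 1 :=
    Set.mem_image_of_mem γ (by constructor <;> norm_num)
  have h1 : γ 1 ∈ γ '' Set.Icc (0:ℝ) 1 :=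
    Set.mem_image_of_mem γ (by constructor <;> norm_num)
  rcases hU with hopen | hclosed
  · rcases hs (U i) (U j) (hopen i) (hopen j)
      (fun z hz => (him hz).elim (fun h => Or.inl ((h i).1 hiσ))
        (fun h => Or.inr ((h j).1 hjτ)))
      ⟨x, hγ0 ▸ h0, hxi⟩ ⟨y, hγ1 ▸ h1, hyj⟩ with ⟨z, hz, hzi, hzj⟩
    rcases him hz with h | h
    · exact hjσ ((h j).2 hzj)
    · exact hiτ ((h i).2 hzi)
  · rcases hs (U j)ᶜ (U i)ᶜ (hclosed j).isOpen_compl (hclosed i).isOpen_compl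
      (fun z hz => (him hz).elim (fun h => Or.inl (fun hzj => hjσ ((h j).2 hzj)))
        (fun h => Or.inr (fun hzi => hiτ ((h i).2 hzi))))
      ⟨x, hγ0 ▸ h0, hxj⟩ ⟨y, hγ1 ▸ h1, hyi⟩ with ⟨z, hz, hzj, hzi⟩
    rcases him hz with h | h
    · exact hzi ((h i).1 hiσ)
    · exact hzj ((h j).1 hjτ)
end

section
/- Let C ⊆ 2^[n] and let U₁,...,Uₙ be convex sets (all open or all closed) realizing C. Let σ, τ ∈ C and x ∈ A_σ, y ∈ A_τ. Define c(t) = {i : (1−t)x + ty ∈ U_i} for t ∈ [0,1]. Then: (a) c(t) ∈ C for all t; (b) for s ≤ t ≤ u, c(s) ∩ c(u) ⊆ c(t); and (c) for every t ∈ [0,1] the germ structure is comparable: for each t there is ε > 0 such that for all t' with |t'−t| < ε, c(t') ⊆ c(t) or c(t) ⊆ c(t'). -/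
/-- Along a segment between points of atoms of a convex realization (all sets open or
all closed): (a) every codeword along the segment belongs to `C`; (b) the codeword
sequence is feasible; (c) locally, codewords are comparable to the codeword at `t`. -/
theorem stmt_15 {d n : ℕ} (C : Set (Finset (Fin n))) (U : Fin n → Set (Fin d → ℝ))
    (hUconv : ∀ i, Convex ℝ (U i))
    (hU : (∀ i, IsOpen (U i)) ∨ (∀ i, IsClosed (U i)))
    (hreal : ∀ ρ : Finset (Fin n), (atom U ρ).Nonempty ↔ ρ ∈ C)
    (σ τ : Finset (Fin n)) (hσ : σ ∈ C) (hτ : τ ∈ C)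
    (x y : Fin d → ℝ) (hx : x ∈ atom U σ) (hy : y ∈ atom U τ)
    (c : ℝ → Set (Fin n))
    (hc : ∀ t, c t = {i | (1 - t) • x + t • y ∈ U i}) :
    (∀ t ∈ Set.Icc (0:ℝ) 1, ∃ ρ ∈ C, (ρ : Set (Fin n)) = c t) ∧
    (∀ s t u : ℝ, 0 ≤ s → s ≤ t → t ≤ u → u ≤ 1 → c s ∩ c u ⊆ c t) ∧
    (∀ t ∈ Set.Icc (0:ℝ) 1, ∃ ε > 0, ∀ t' ∈ Set.Icc (0:ℝ) 1,
      |t' - t| < ε → c t' ⊆ c t ∨ c t ⊆ c t') := by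
  classical
  set p : ℝ → (Fin d → ℝ) := fun t => (1 - t) • x + t • y with hp
  have hpc : Continuous p := by
    apply Continuous.add
    · exact (continuous_const.sub continuous_id).smul continuous_const
    · exact continuous_id.smul continuous_const
  have hkey : ∀ t : ℝ, p t = AffineMap.lineMap (k := ℝ) x y t := by
    intro t
    simp only [hp, AffineMap.lineMap_apply_module]
  refine ⟨?_, ?_, ?_⟩
  · intro t _
    refine ⟨Finset.univ.filter (fun i => p t ∈ U i), ?_, ?_⟩
    · rw [← hreal]
      exact ⟨p t, fun i => by simp [Finset.mem_filter]⟩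
    · ext i
      simp [hc, hp]
  · intro s t u _ hst htu _ i hi
    simp only [hc, Set.mem_inter_iff, Set.mem_setOf_eq] at hi ⊢
    have hmem : p t ∈ segment ℝ (p s) (p u) := by
      rw [hkey s, hkey u, hkey t, ← image_segment]
      exact ⟨t, by rw [segment_eq_Icc (hst.trans htu)]; exact ⟨hst, htu⟩, rfl⟩
    exact (hUconv i).segment_subset hi.1 hi.2 hmem
  · intro t _
    rcases hU with hop | hcl
    · -- open case: c t ⊆ c t' for t' near t
      set W : Set (Fin d → ℝ) := ⋂ i ∈ Finset.univ.filter (fun i => p t ∈ U i), U i with hW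
      have hWopen : IsOpen W := isOpen_biInter_finset (fun i _ => hop i)
      have hWmem : p t ∈ W := by
        simp only [hW, Set.mem_iInter]
        intro i hi
        exact (Finset.mem_filter.mp hi).2
      have : IsOpen (p ⁻¹' W) := hWopen.preimage hpc
      rcases Metric.isOpen_iff.mp this t hWmem with ⟨ε, hε, hball⟩
      refine ⟨ε, hε, fun t' _ hlt => Or.inr ?_⟩
      intro i hi
      have ht' : p t' ∈ W := hball (by simpa [Real.dist_eq] using hlt)
      simp only [hc, Set.mem_setOf_eq] at hi ⊢
      simp only [hW, Set.mem_iInter] at ht'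
      exact ht' i (Finset.mem_filter.mpr ⟨Finset.mem_univ i, hi⟩)
    · -- closed case: c t' ⊆ c t for t' near t
      set W : Set (Fin d → ℝ) := ⋂ i ∈ Finset.univ.filter (fun i => p t ∉ U i), (U i)ᶜ with hW
      have hWopen : IsOpen W := isOpen_biInter_finset (fun i _ => (hcl i).isOpen_compl)
      have hWmem : p t ∈ W := by
        simp only [hW, Set.mem_iInter]
        intro i hi
        exact (Finset.mem_filter.mp hi).2
      have : IsOpen (p ⁻¹' W) := hWopen.preimage hpc
      rcases Metric.isOpen_iff.mp this t hWmem with ⟨ε, hε, hball⟩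
      refine ⟨ε, hε, fun t' _ hlt => Or.inl ?_⟩
      intro i hi
      have ht' : p t' ∈ W := hball (by simpa [Real.dist_eq] using hlt)
      simp only [hc, Set.mem_setOf_eq] at hi ⊢
      by_contra hnot
      simp only [hW, Set.mem_iInter] at ht'
      exact ht' i (Finset.mem_filter.mpr ⟨Finset.mem_univ i, hnot⟩) hi
end

section
/- Let p₁₂, p₁₄, p₂₄ be three points in ℝ² positioned with p₁₂ above the line through p₁₄ and p₂₄, and p₁₄ strictly to the left of p₂₄. Suppose p₃₅, p₃₆ lie (in this order) on the segment from p₁₃ to p₂₃ and p₄₆, p₄₅ lie (in this order) on the segment from p₁₄ to p₂₄, where p₁₃ is on segment [p₁₂, p₁₄] and p₂₃ is on segment [p₁₂, p₂₄]. Then the segments [p₃₅, p₄₅] and [p₃₆, p₄₆] intersect. -/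
lemma seg_cross (A B C D : Fin 2 → ℝ) (a b c d : ℝ)
    (had : a = (D 0 - C 0) * (A 1 - C 1) - (D 1 - C 1) * (A 0 - C 0))
    (hbd : b = (D 0 - C 0) * (B 1 - C 1) - (D 1 - C 1) * (B 0 - C 0))
    (hcd : c = (B 0 - A 0) * (C 1 - A 1) - (B 1 - A 1) * (C 0 - A 0))
    (hdd : d = (B 0 - A 0) * (D 1 - A 1) - (B 1 - A 1) * (D 0 - A 0))
    (hA : a ≤ 0) (hB : 0 ≤ b) (hC : 0 ≤ c) (hD : d ≤ 0) (hst : 0 < b - a) :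
    (segment ℝ A B ∩ segment ℝ C D).Nonempty := by
  have hE : b - a = c - d := by rw [had, hbd, hcd, hdd]; ring
  have hne : b - a ≠ 0 := ne_of_gt hst
  have key : ∀ i : Fin 2, -d * C i + c * D i = b * A i - a * B i := by
    intro i
    fin_cases i <;>
      · simp only [had, hbd, hcd, hdd, Fin.isValue, Fin.mk_zero, Fin.mk_one]
        ring
  refine ⟨fun i => (b * A i - a * B i) / (b - a),
    ⟨b / (b - a), -a / (b - a), ?_, ?_, ?_, ?_⟩,
    ⟨-d / (b - a), c / (b - a), ?_, ?_, ?_, ?_⟩⟩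
  · exact div_nonneg (by linarith) (by linarith)
  · exact div_nonneg (by linarith) (by linarith)
  · rw [← add_div, div_eq_one_iff_eq hne]; ring
  · funext i
    simp only [Pi.add_apply, Pi.smul_apply, smul_eq_mul]
    rw [div_mul_eq_mul_div, div_mul_eq_mul_div, ← add_div]
    ring_nf
  · exact div_nonneg (by linarith) (by linarith)
  · exact div_nonneg (by linarith) (by linarith)
  · rw [← add_div, div_eq_one_iff_eq hne]; linarith [hE]
  · funext i
    simp only [Pi.add_apply, Pi.smul_apply, smul_eq_mul]
    rw [div_mul_eq_mul_div, div_mul_eq_mul_div, ← add_div, key i]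

lemma mem_seg_aff (u v : Fin 2 → ℝ) (x y l c : ℝ) (h0 : 0 ≤ l) (h1 : l ≤ 1)
    (hc : c = (1 - l) * x + l * y) :
    (fun i => (1 - c) * u i + c * v i) ∈
      segment ℝ (fun i => (1 - x) * u i + x * v i) (fun i => (1 - y) * u i + y * v i) := by
  refine ⟨1 - l, l, by linarith, h0, by ring, funext fun i => ?_⟩
  simp only [Pi.add_apply, Pi.smul_apply, smul_eq_mul]
  rw [hc]; ring

set_option maxHeartbeats 1000000 in
/-- Planar crossing argument: with `p₁₂` above the line through `p₁₄` and `p₂₄`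
(positive orientation) and `p₁₄` strictly left of `p₂₄`, if `p₁₃ ∈ [p₁₂,p₁₄]`,
`p₂₃ ∈ [p₁₂,p₂₄]`, the points `p₃₅, p₃₆` appear in this order along the segment from
`p₁₃` to `p₂₃`, and `p₄₆, p₄₅` appear in this order along the segment from `p₁₄` to
`p₂₄`, then the segments `[p₃₅,p₄₅]` and `[p₃₆,p₄₆]` intersect. -/
theorem stmt_17 (p12 p13 p14 p23 p24 p35 p36 p45 p46 : Fin 2 → ℝ)
    (horient : 0 < (p24 0 - p14 0) * (p12 1 - p14 1) - (p24 1 - p14 1) * (p12 0 - p14 0))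
    (hleft : p14 0 < p24 0)
    (h13 : p13 ∈ segment ℝ p12 p14) (h23 : p23 ∈ segment ℝ p12 p24)
    (htop : ∃ s t : ℝ, 0 ≤ s ∧ s < t ∧ t ≤ 1 ∧
      p35 = (1 - s) • p13 + s • p23 ∧ p36 = (1 - t) • p13 + t • p23)
    (hbot : ∃ a b : ℝ, 0 ≤ a ∧ a < b ∧ b ≤ 1 ∧
      p46 = (1 - a) • p14 + a • p24 ∧ p45 = (1 - b) • p14 + b • p24) :
    (segment ℝ p35 p45 ∩ segment ℝ p36 p46).Nonempty := by
  obtain ⟨s, t, hs0, hst, ht1, hp35, hp36⟩ := htop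
  obtain ⟨a, b, ha0, hab, hb1, hp46, hp45⟩ := hbot
  obtain ⟨m, m', hm0, hm'0, hmm, h13e⟩ := h13
  obtain ⟨n, n', hn0, hn'0, hnn, h23e⟩ := h23
  have hm'e : m' = 1 - m := by linarith
  have hn'e : n' = 1 - n := by linarith
  subst hm'e hn'e
  have hm1 : m ≤ 1 := by linarith
  have hn1 : n ≤ 1 := by linarith
  have ha1 : a < 1 := lt_of_lt_of_le hab hb1
  have hs1 : s < 1 := lt_of_lt_of_le hst ht1
  have ht0 : 0 < t := lt_of_le_of_lt hs0 hst
  have e13 : ∀ i, p13 i = m * p12 i + (1 - m) * p14 i := fun i => by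
    have h1 := congrFun h13e i
    simp only [Pi.add_apply, Pi.smul_apply, smul_eq_mul] at h1
    linarith [h1]
  have e23 : ∀ i, p23 i = n * p12 i + (1 - n) * p24 i := fun i => by
    have h1 := congrFun h23e i
    simp only [Pi.add_apply, Pi.smul_apply, smul_eq_mul] at h1
    linarith [h1]
  have e35 : ∀ i, p35 i =
      (1 - s) * (m * p12 i + (1 - m) * p14 i) + s * (n * p12 i + (1 - n) * p24 i) := fun i => by
    have h1 := congrFun hp35 i
    simp only [Pi.add_apply, Pi.smul_apply, smul_eq_mul] at h1
    rw [h1, e13 i, e23 i]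
  have e36 : ∀ i, p36 i =
      (1 - t) * (m * p12 i + (1 - m) * p14 i) + t * (n * p12 i + (1 - n) * p24 i) := fun i => by
    have h1 := congrFun hp36 i
    simp only [Pi.add_apply, Pi.smul_apply, smul_eq_mul] at h1
    rw [h1, e13 i, e23 i]
  have e46 : ∀ i, p46 i = (1 - a) * p14 i + a * p24 i := fun i => by
    have h1 := congrFun hp46 i
    simp only [Pi.add_apply, Pi.smul_apply, smul_eq_mul] at h1
    rw [h1]
  have e45 : ∀ i, p45 i = (1 - b) * p14 i + b * p24 i := fun i => by
    have h1 := congrFun hp45 i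
    simp only [Pi.add_apply, Pi.smul_apply, smul_eq_mul] at h1
    rw [h1]
  by_cases hdeg : m = 0 ∧ n = 0
  · -- degenerate collinear case
    obtain ⟨hme, hne⟩ := hdeg
    have f35 : p35 = fun i => (1 - s) * p14 i + s * p24 i := funext fun i => by
      rw [e35 i, hme, hne]; ring
    have f36 : p36 = fun i => (1 - t) * p14 i + t * p24 i := funext fun i => by
      rw [e36 i, hme, hne]; ring
    have f45 : p45 = fun i => (1 - b) * p14 i + b * p24 i := funext fun i => e45 i
    have f46 : p46 = fun i => (1 - a) * p14 i + a * p24 i := funext fun i => e46 i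
    rw [f35, f36, f45, f46]
    rcases le_total a s with h | h
    · -- common parameter c = s
      refine ⟨fun i => (1 - s) * p14 i + s * p24 i, ?_, ?_⟩
      · exact mem_seg_aff p14 p24 s b 0 s (le_refl 0) zero_le_one (by ring)
      · have hta : 0 < t - a := by linarith
        refine mem_seg_aff p14 p24 t a ((t - s) / (t - a)) s ?_ ?_ ?_
        · exact div_nonneg (by linarith) (by linarith)
        · rw [div_le_one hta]; linarith
        · field_simp; ring
    · -- common parameter c = a
      refine ⟨fun i => (1 - a) * p14 i + a * p24 i, ?_, ?_⟩
      · have hbs : 0 < b - s := by linarith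
        refine mem_seg_aff p14 p24 s b ((a - s) / (b - s)) a ?_ ?_ ?_
        · exact div_nonneg (by linarith) (by linarith)
        · rw [div_le_one hbs]; linarith
        · field_simp; ring
      · exact mem_seg_aff p14 p24 t a 1 a zero_le_one (le_refl 1) (by ring)
  · -- nondegenerate case: apply seg_cross
    have hK := horient
    have hmn : 0 < m ∨ 0 < n := by
      rcases not_and_or.mp hdeg with h | h
      · exact Or.inl (lt_of_le_of_ne hm0 (Ne.symm h))
      · exact Or.inr (lt_of_le_of_ne hn0 (Ne.symm h))
    have hBa : 0 ≤ m * (1 - a) + n * a - m * n := by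
      have : m * (1 - a) + n * a - m * n = m * (1 - a) * (1 - n) + n * a * (1 - m) := by ring
      rw [this]
      have h1 : 0 ≤ m * (1 - a) * (1 - n) :=
        mul_nonneg (mul_nonneg hm0 (by linarith)) (by linarith)
      have h2 : 0 ≤ n * a * (1 - m) := mul_nonneg (mul_nonneg hn0 ha0) (by linarith)
      linarith
    have hBb : 0 ≤ m * (1 - b) + n * b - m * n := by
      have : m * (1 - b) + n * b - m * n = m * (1 - b) * (1 - n) + n * b * (1 - m) := by ring
      rw [this]
      have h1 : 0 ≤ m * (1 - b) * (1 - n) :=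
        mul_nonneg (mul_nonneg hm0 (by linarith)) (by linarith)
      have h2 : 0 ≤ n * b * (1 - m) := mul_nonneg (mul_nonneg hn0 (by linarith)) (by linarith)
      linarith
    have hgt : 0 ≤ (1 - t) * m + t * n :=
      add_nonneg (mul_nonneg (by linarith) hm0) (mul_nonneg (by linarith) hn0)
    have hgs : 0 ≤ (1 - s) * m + s * n :=
      add_nonneg (mul_nonneg (by linarith) hm0) (mul_nonneg hs0 hn0)
    obtain ⟨K, hKdef⟩ : ∃ K, K = (p24 0 - p14 0) * (p12 1 - p14 1) - (p24 1 - p14 1) * (p12 0 - p14 0) := ⟨_, rfl⟩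
    rw [← hKdef] at hK
    have eA : (p46 0 - p36 0) * (p35 1 - p36 1) - (p46 1 - p36 1) * (p35 0 - p36 0)
        = -(K * ((t - s) * (m * (1 - a) + n * a - m * n))) := by
      rw [hKdef, e46 0, e46 1, e36 0, e36 1, e35 0, e35 1]; ring
    have eB : (p46 0 - p36 0) * (p45 1 - p36 1) - (p46 1 - p36 1) * (p45 0 - p36 0)
        = K * ((b - a) * ((1 - t) * m + t * n)) := by
      rw [hKdef, e46 0, e46 1, e36 0, e36 1, e45 0, e45 1]; ring
    have eC : (p45 0 - p35 0) * (p36 1 - p35 1) - (p45 1 - p35 1) * (p36 0 - p35 0)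
        = K * ((t - s) * (m * (1 - b) + n * b - m * n)) := by
      rw [hKdef, e45 0, e45 1, e35 0, e35 1, e36 0, e36 1]; ring
    have eD : (p45 0 - p35 0) * (p46 1 - p35 1) - (p45 1 - p35 1) * (p46 0 - p35 0)
        = K * (((1 - s) * m + s * n) * (a - b)) := by
      rw [hKdef, e45 0, e45 1, e35 0, e35 1, e46 0, e46 1]; ring
    have hstrict : 0 < (b - a) * ((1 - t) * m + t * n) + (t - s) * (m * (1 - a) + n * a - m * n) := by
      rcases hmn with hm | hn
      · by_cases hnn0 : 0 < n
        · have h1 : 0 < (b - a) * ((1 - t) * m + t * n) := by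
            apply mul_pos (by linarith)
            have : 0 < t * n := mul_pos ht0 hnn0
            have : 0 ≤ (1 - t) * m := mul_nonneg (by linarith) hm0
            linarith
          nlinarith [mul_nonneg (le_of_lt (sub_pos.mpr hst)) hBa]
        · have hne0 : n = 0 := le_antisymm (not_lt.mp hnn0) hn0
          have h2 : 0 < (t - s) * (m * (1 - a) + n * a - m * n) := by
            apply mul_pos (by linarith)
            rw [hne0]
            nlinarith
          nlinarith [mul_nonneg (le_of_lt (sub_pos.mpr hab)) hgt]
      · have h1 : 0 < (b - a) * ((1 - t) * m + t * n) := by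
          apply mul_pos (by linarith)
          have h3 : 0 < t * n := mul_pos ht0 hn
          have h4 : 0 ≤ (1 - t) * m := mul_nonneg (by linarith) hm0
          linarith
        nlinarith [mul_nonneg (le_of_lt (sub_pos.mpr hst)) hBa]
    refine seg_cross p35 p45 p36 p46
      (-(K * ((t - s) * (m * (1 - a) + n * a - m * n))))
      (K * ((b - a) * ((1 - t) * m + t * n)))
      (K * ((t - s) * (m * (1 - b) + n * b - m * n)))
      (K * (((1 - s) * m + s * n) * (a - b)))
      eA.symm eB.symm eC.symm eD.symm ?_ ?_ ?_ ?_ ?_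
    · have : 0 ≤ K * ((t - s) * (m * (1 - a) + n * a - m * n)) :=
        mul_nonneg (le_of_lt hK) (mul_nonneg (by linarith) hBa)
      linarith
    · exact mul_nonneg (le_of_lt hK) (mul_nonneg (by linarith) hgt)
    · exact mul_nonneg (le_of_lt hK) (mul_nonneg (by linarith) hBb)
    · have : 0 ≤ K * (((1 - s) * m + s * n) * (b - a)) :=
        mul_nonneg (le_of_lt hK) (mul_nonneg hgs (by linarith))
      nlinarith
    · have heq : K * ((b - a) * ((1 - t) * m + t * n)) -
          -(K * ((t - s) * (m * (1 - a) + n * a - m * n)))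
          = K * ((b - a) * ((1 - t) * m + t * n) + (t - s) * (m * (1 - a) + n * a - m * n)) := by
        ring
      rw [heq]
      exact mul_pos hK hstrict
end

section
/- Let C ⊆ 2^[n] be a code and let f : C → D be a surjective morphism of codes (preimages of trunks are trunks). If U₁,...,Uₙ is an open convex realization of C in ℝ^d, then D has an open convex realization in ℝ^d. In particular, if D is a minor of C then odim(D) ≤ odim(C). -/
/-- The trunk of `σ` in the code `C`. -/
def trunkOf {α : Type*} (C : Set (Finset α)) (σ : Finset α) : Set (Finset α) :=
  {c ∈ C | σ ⊆ c}

/-- `T` is a trunk in `C`: the empty set or a set of the form `Tk_C(σ)`. -/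
def IsTrunk {α : Type*} (C : Set (Finset α)) (T : Set (Finset α)) : Prop :=
  T = ∅ ∨ ∃ σ, T = trunkOf C σ

/-- If `f : C → D` is a surjective morphism of codes (preimages of trunks are trunks)
and `C` has an open convex realization in `ℝ^d`, then so does `D`.
(In particular, if `D` is a minor of `C` then `odim(D) ≤ odim(C)`.) -/
theorem stmt_19 {n m d : ℕ} (C : Set (Finset (Fin n))) (D : Set (Finset (Fin m)))
    (f : Finset (Fin n) → Finset (Fin m))
    (hmap : ∀ c ∈ C, f c ∈ D)
    (hsurj : ∀ e ∈ D, ∃ c ∈ C, f c = e)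
    (hmor : ∀ T : Set (Finset (Fin m)), IsTrunk D T →
      IsTrunk C {c ∈ C | f c ∈ T})
    (U : Fin n → Set (Fin d → ℝ))
    (hU : ∀ i, IsOpen (U i) ∧ Convex ℝ (U i))
    (hreal : ∀ σ : Finset (Fin n), (atom U σ).Nonempty ↔ σ ∈ C) :
    ∃ V : Fin m → Set (Fin d → ℝ),
      (∀ j, IsOpen (V j) ∧ Convex ℝ (V j)) ∧
      ∀ τ : Finset (Fin m), (atom V τ).Nonempty ↔ τ ∈ D := by
  classical
  -- the code of a point
  set code : (Fin d → ℝ) → Finset (Fin n) :=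
    fun x => Finset.univ.filter (fun i => x ∈ U i) with hcode
  have hcode_mem : ∀ x i, i ∈ code x ↔ x ∈ U i := by
    intro x i; simp [hcode]
  have hcodeC : ∀ x, code x ∈ C := by
    intro x
    have : x ∈ atom U (code x) := fun i => hcode_mem x i
    exact (hreal (code x)).1 ⟨x, this⟩
  -- construct V pointwise
  have key : ∀ j : Fin m, ∃ V : Set (Fin d → ℝ),
      IsOpen V ∧ Convex ℝ V ∧ ∀ x, x ∈ V ↔ j ∈ f (code x) := by
    intro j
    have htrunk : IsTrunk C {c ∈ C | f c ∈ trunkOf D {j}} :=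
      hmor (trunkOf D {j}) (Or.inr ⟨{j}, rfl⟩)
    have hP : ∀ x, code x ∈ {c ∈ C | f c ∈ trunkOf D {j}} ↔ j ∈ f (code x) := by
      intro x
      constructor
      · rintro ⟨-, -, hj⟩
        exact hj (Finset.mem_singleton_self j)
      · intro hj
        exact ⟨hcodeC x, hmap _ (hcodeC x), Finset.singleton_subset_iff.2 hj⟩
    rcases htrunk with hemp | ⟨σ, hσ⟩
    · refine ⟨∅, isOpen_empty, convex_empty, fun x => ?_⟩
      simp only [Set.mem_empty_iff_false, false_iff]
      intro hj
      have := (hP x).2 hj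
      rw [hemp] at this
      exact this
    · refine ⟨⋂ i ∈ σ, U i, isOpen_biInter_finset (fun i _ => (hU i).1),
        convex_iInter (fun i => convex_iInter (fun _ => (hU i).2)), fun x => ?_⟩
      rw [← hP x, hσ]
      constructor
      · intro hx
        refine ⟨hcodeC x, fun i hi => ?_⟩
        exact (hcode_mem x i).2 (Set.mem_iInter₂.1 hx i hi)
      · rintro ⟨-, hsub⟩
        exact Set.mem_iInter₂.2 fun i hi => (hcode_mem x i).1 (hsub hi)
  choose V hVopen hVconv hVmem using key
  refine ⟨V, fun j => ⟨hVopen j, hVconv j⟩, fun τ => ?_⟩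
  have hatom : ∀ x, x ∈ atom V τ ↔ τ = f (code x) := by
    intro x
    constructor
    · intro hx
      apply Finset.ext
      intro j
      rw [← hVmem j x]
      exact hx j
    · intro h j
      rw [h, hVmem j x]
  constructor
  · rintro ⟨x, hx⟩
    rw [hatom x] at hx
    rw [hx]
    exact hmap _ (hcodeC x)
  · intro hτ
    obtain ⟨c, hc, hfc⟩ := hsurj τ hτ
    obtain ⟨x, hx⟩ := (hreal c).2 hc
    have hcx : code x = c := by
      apply Finset.ext
      intro i
      rw [hcode_mem x i]
      exact (hx i).symm
    exact ⟨x, (hatom x).2 (by rw [hcx, hfc])⟩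
end
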